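/- arXiv:math/0601382 — 9 statements merged into one kernel-verified Lean document; each statement's English description precedes it below -/
import Mathlib

section
/- Let α, ε, μ, p be real numbers with p ≠ 0, μ ≠ 0, μ ≠ 1, μ/α > 0, and ε < −1. Let κ, λ ∈ ℂ satisfy κ² = (2μ/α)(ε+1) and λ² = (2μ/α)(ε−1) (so κ and λ are nonzero purely imaginary). Then none of the four complex numbers α₁ = ((μ−1)/(64κ²))·(p(μ−1)(κ²−λ²) − 4κ(μ+1))·(p(κ²−λ²) − 4κ), α₂ = ((μ−1)/(64κ²))·(p(μ−1)(κ²−λ²) + 4κ(μ+1))·(p(κ²−λ²) + 4κ), α₃ = ((μ−1)/(64λ²))·(p(μ−1)(κ²−λ²) − 4λ(μ+1))·(p(κ²−λ²) − 4λ), α₄ = ((μ−1)/(64λ²))·(p(μ−1)(κ²−λ²) + 4λ(μ+1))·(p(κ²−λ²) + 4λ) is a real number; in fact i·Im α₁ = −i·Im α₂ = μ²(1−μ)p/(2ακ) ≠ 0 and i·Im α₃ = −i·Im α₄ = μ²(1−μ)p/(2αλ) ≠ 0. -/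
open Complex

lemma aux_imag (z : ℂ) (r : ℝ) (hr : r < 0) (hz : z ^ 2 = (r : ℂ)) :
    (starRingEnd ℂ) z = -z ∧ z ≠ 0 := by
  have h := hz
  rw [Complex.ext_iff] at h
  simp only [pow_two, Complex.mul_re, Complex.mul_im, Complex.ofReal_re,
    Complex.ofReal_im] at h
  have him : z.im ≠ 0 := by
    intro h0
    rw [h0] at h
    nlinarith [h.1, sq_nonneg z.re]
  have hre : z.re = 0 := by
    rcases mul_eq_zero.mp (by linarith [h.2] : z.re * z.im = 0) with h' | h'
    · exact h'
    · exact absurd h' him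
  constructor
  · apply Complex.ext <;> simp [hre]
  · intro h0; rw [h0] at him; simp at him

lemma aux_I_im (z : ℂ) : I * (z.im : ℂ) = (z - (starRingEnd ℂ) z) / 2 := by
  rw [Complex.im_eq_sub_conj]
  field_simp

set_option maxHeartbeats 1000000 in
/-- The four double-pole coefficients of the normal variational equation of the
reduced two-body problem on the hyperbolic plane `H²` with the Newton potential
are non-real, with explicit imaginary parts. -/
theorem stmt_3 (α ε μ p : ℝ) (hp : p ≠ 0) (hμ : μ ≠ 0) (hμ1 : μ ≠ 1)
    (hμα : μ / α > 0) (hε : ε < -1)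
    (κ lam : ℂ)
    (hκ : κ ^ 2 = (2 * (μ : ℂ) / (α : ℂ)) * ((ε : ℂ) + 1))
    (hlam : lam ^ 2 = (2 * (μ : ℂ) / (α : ℂ)) * ((ε : ℂ) - 1))
    (a₁ a₂ a₃ a₄ : ℂ)
    (ha₁ : a₁ = (((μ : ℂ) - 1) / (64 * κ ^ 2)) *
      ((p : ℂ) * ((μ : ℂ) - 1) * (κ ^ 2 - lam ^ 2) - 4 * κ * ((μ : ℂ) + 1)) *
      ((p : ℂ) * (κ ^ 2 - lam ^ 2) - 4 * κ))
    (ha₂ : a₂ = (((μ : ℂ) - 1) / (64 * κ ^ 2)) *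
      ((p : ℂ) * ((μ : ℂ) - 1) * (κ ^ 2 - lam ^ 2) + 4 * κ * ((μ : ℂ) + 1)) *
      ((p : ℂ) * (κ ^ 2 - lam ^ 2) + 4 * κ))
    (ha₃ : a₃ = (((μ : ℂ) - 1) / (64 * lam ^ 2)) *
      ((p : ℂ) * ((μ : ℂ) - 1) * (κ ^ 2 - lam ^ 2) - 4 * lam * ((μ : ℂ) + 1)) *
      ((p : ℂ) * (κ ^ 2 - lam ^ 2) - 4 * lam))
    (ha₄ : a₄ = (((μ : ℂ) - 1) / (64 * lam ^ 2)) *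
      ((p : ℂ) * ((μ : ℂ) - 1) * (κ ^ 2 - lam ^ 2) + 4 * lam * ((μ : ℂ) + 1)) *
      ((p : ℂ) * (κ ^ 2 - lam ^ 2) + 4 * lam)) :
    a₁ ∉ Set.range (Complex.ofReal) ∧ a₂ ∉ Set.range (Complex.ofReal) ∧
    a₃ ∉ Set.range (Complex.ofReal) ∧ a₄ ∉ Set.range (Complex.ofReal) ∧
    I * (a₁.im : ℂ) = ((μ : ℂ) ^ 2 * (1 - (μ : ℂ)) * (p : ℂ)) / (2 * (α : ℂ) * κ) ∧
    -(I * (a₂.im : ℂ)) = ((μ : ℂ) ^ 2 * (1 - (μ : ℂ)) * (p : ℂ)) / (2 * (α : ℂ) * κ) ∧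
    ((μ : ℂ) ^ 2 * (1 - (μ : ℂ)) * (p : ℂ)) / (2 * (α : ℂ) * κ) ≠ 0 ∧
    I * (a₃.im : ℂ) = ((μ : ℂ) ^ 2 * (1 - (μ : ℂ)) * (p : ℂ)) / (2 * (α : ℂ) * lam) ∧
    -(I * (a₄.im : ℂ)) = ((μ : ℂ) ^ 2 * (1 - (μ : ℂ)) * (p : ℂ)) / (2 * (α : ℂ) * lam) ∧
    ((μ : ℂ) ^ 2 * (1 - (μ : ℂ)) * (p : ℂ)) / (2 * (α : ℂ) * lam) ≠ 0 := by
  have hα : α ≠ 0 := by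
    intro h; rw [h, div_zero] at hμα; exact lt_irrefl 0 hμα
  have hαC : (α : ℂ) ≠ 0 := Complex.ofReal_ne_zero.mpr hα
  have hμC : (μ : ℂ) ≠ 0 := Complex.ofReal_ne_zero.mpr hμ
  have hpC : (p : ℂ) ≠ 0 := Complex.ofReal_ne_zero.mpr hp
  have hμ1C : (μ : ℂ) - 1 ≠ 0 := by
    intro h
    apply hμ1
    have : (μ : ℂ) = 1 := by linear_combination h
    exact_mod_cast this
  have hquot : 0 < 2 * (μ / α) := by positivity
  have hκ' : κ ^ 2 = ((2 * μ / α * (ε + 1) : ℝ) : ℂ) := by push_cast; exact hκ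
  have hr1 : 2 * μ / α * (ε + 1) < 0 := by
    have h2 : 2 * μ / α = 2 * (μ / α) := by ring
    nlinarith
  have hlam' : lam ^ 2 = ((2 * μ / α * (ε - 1) : ℝ) : ℂ) := by push_cast; exact hlam
  have hr2 : 2 * μ / α * (ε - 1) < 0 := by
    have h2 : 2 * μ / α = 2 * (μ / α) := by ring
    nlinarith
  obtain ⟨hcκ, hκ0⟩ := aux_imag κ _ hr1 hκ'
  obtain ⟨hclam, hlam0⟩ := aux_imag lam _ hr2 hlam'
  -- key relation
  have hdiff : κ ^ 2 - lam ^ 2 = 4 * (μ : ℂ) / (α : ℂ) := by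
    rw [hκ, hlam]; field_simp; ring
  -- conjugates
  have hca₁ : (starRingEnd ℂ) a₁ = (((μ : ℂ) - 1) / (64 * κ ^ 2)) *
      ((p : ℂ) * ((μ : ℂ) - 1) * (κ ^ 2 - lam ^ 2) + 4 * κ * ((μ : ℂ) + 1)) *
      ((p : ℂ) * (κ ^ 2 - lam ^ 2) + 4 * κ) := by
    rw [ha₁]; simp only [map_mul, map_div₀, map_sub, map_add, map_pow, map_ofNat,
      Complex.conj_ofReal, map_one, hcκ, hclam]; ring
  have hca₂ : (starRingEnd ℂ) a₂ = (((μ : ℂ) - 1) / (64 * κ ^ 2)) *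
      ((p : ℂ) * ((μ : ℂ) - 1) * (κ ^ 2 - lam ^ 2) - 4 * κ * ((μ : ℂ) + 1)) *
      ((p : ℂ) * (κ ^ 2 - lam ^ 2) - 4 * κ) := by
    rw [ha₂]; simp only [map_mul, map_div₀, map_sub, map_add, map_pow, map_ofNat,
      Complex.conj_ofReal, map_one, hcκ, hclam]; ring
  have hca₃ : (starRingEnd ℂ) a₃ = (((μ : ℂ) - 1) / (64 * lam ^ 2)) *
      ((p : ℂ) * ((μ : ℂ) - 1) * (κ ^ 2 - lam ^ 2) + 4 * lam * ((μ : ℂ) + 1)) *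
      ((p : ℂ) * (κ ^ 2 - lam ^ 2) + 4 * lam) := by
    rw [ha₃]; simp only [map_mul, map_div₀, map_sub, map_add, map_pow, map_ofNat,
      Complex.conj_ofReal, map_one, hcκ, hclam]; ring
  have hca₄ : (starRingEnd ℂ) a₄ = (((μ : ℂ) - 1) / (64 * lam ^ 2)) *
      ((p : ℂ) * ((μ : ℂ) - 1) * (κ ^ 2 - lam ^ 2) - 4 * lam * ((μ : ℂ) + 1)) *
      ((p : ℂ) * (κ ^ 2 - lam ^ 2) - 4 * lam) := by
    rw [ha₄]; simp only [map_mul, map_div₀, map_sub, map_add, map_pow, map_ofNat,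
      Complex.conj_ofReal, map_one, hcκ, hclam]; ring
  have hccκ : (α:ℂ)^2 * κ^2 * ((α:ℂ))⁻¹^2 * κ⁻¹^2 = 1 := by
    field_simp
  have hcclam : (α:ℂ)^2 * lam^2 * ((α:ℂ))⁻¹^2 * lam⁻¹^2 = 1 := by
    field_simp
  -- the imaginary-part identities
  have h1 : I * (a₁.im : ℂ) = ((μ : ℂ) ^ 2 * (1 - (μ : ℂ)) * (p : ℂ)) / (2 * (α : ℂ) * κ) := by
    rw [aux_I_im, hca₁, ha₁, hdiff]
    field_simp [hκ0, hαC]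
    ring
  have h2 : -(I * (a₂.im : ℂ)) = ((μ : ℂ) ^ 2 * (1 - (μ : ℂ)) * (p : ℂ)) / (2 * (α : ℂ) * κ) := by
    rw [aux_I_im, hca₂, ha₂, hdiff]
    field_simp [hκ0, hαC]
    ring
  have h3 : I * (a₃.im : ℂ) = ((μ : ℂ) ^ 2 * (1 - (μ : ℂ)) * (p : ℂ)) / (2 * (α : ℂ) * lam) := by
    rw [aux_I_im, hca₃, ha₃, hdiff]
    field_simp [hlam0, hαC]
    ring
  have h4 : -(I * (a₄.im : ℂ)) = ((μ : ℂ) ^ 2 * (1 - (μ : ℂ)) * (p : ℂ)) / (2 * (α : ℂ) * lam) := by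
    rw [aux_I_im, hca₄, ha₄, hdiff]
    field_simp [hlam0, hαC]
    ring
  have hnum : (μ : ℂ) ^ 2 * (1 - (μ : ℂ)) * (p : ℂ) ≠ 0 := by
    apply mul_ne_zero (mul_ne_zero (pow_ne_zero 2 hμC) _) hpC
    intro h; apply hμ1C; linear_combination -h
  have hne1 : ((μ : ℂ) ^ 2 * (1 - (μ : ℂ)) * (p : ℂ)) / (2 * (α : ℂ) * κ) ≠ 0 :=
    div_ne_zero hnum (mul_ne_zero (mul_ne_zero two_ne_zero hαC) hκ0)
  have hne2 : ((μ : ℂ) ^ 2 * (1 - (μ : ℂ)) * (p : ℂ)) / (2 * (α : ℂ) * lam) ≠ 0 :=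
    div_ne_zero hnum (mul_ne_zero (mul_ne_zero two_ne_zero hαC) hlam0)
  have nr : ∀ z : ℂ, I * (z.im : ℂ) ≠ 0 → z ∉ Set.range (Complex.ofReal) := by
    rintro z hz ⟨r, hr⟩
    apply hz
    rw [← hr]
    simp
  refine ⟨nr a₁ ?_, nr a₂ ?_, nr a₃ ?_, nr a₄ ?_, h1, h2, hne1, h3, h4, hne2⟩
  · rw [h1]; exact hne1
  · intro h; apply hne1; rw [← h2, h, neg_zero]
  · rw [h3]; exact hne2
  · intro h; apply hne2; rw [← h4, h, neg_zero]
end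

section
/- Let β, ε, μ, p be real numbers with p ≠ 0, μ ≠ 0, μ ≠ 1, μ/β > 0, and ε < −1/2. Let κ, λ ∈ ℂ satisfy κ² = μ(2ε+1)/β and λ² = 2με/β (so κ is nonzero purely imaginary and λ² is real). Then neither of the two complex numbers α₁ = ((μ−1)/(4κ²))·(p(μ−1)(κ²−λ²) − κ(μ+1))·(p(κ²−λ²) − κ) and α₂ = ((μ−1)/(4κ²))·(p(μ−1)(κ²−λ²) + κ(μ+1))·(p(κ²−λ²) + κ) is a real number; in fact i·Im α₁ = −i·Im α₂ = μ²(1−μ)p/(2βκ) ≠ 0. -/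
open Complex

/-- The two double-pole coefficients at `±κ` of the normal variational equation of
the reduced two-body problem on the sphere `S²` with the oscillator potential are
non-real, with explicit imaginary parts. -/
theorem stmt_4 (β ε μ p : ℝ) (hp : p ≠ 0) (hμ : μ ≠ 0) (hμ1 : μ ≠ 1)
    (hμβ : μ / β > 0) (hε : ε < -1/2)
    (κ lam : ℂ)
    (hκ : κ ^ 2 = ((μ : ℂ) * (2 * (ε : ℂ) + 1)) / (β : ℂ))
    (hlam : lam ^ 2 = (2 * (μ : ℂ) * (ε : ℂ)) / (β : ℂ))
    (a₁ a₂ : ℂ)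
    (ha₁ : a₁ = (((μ : ℂ) - 1) / (4 * κ ^ 2)) *
      ((p : ℂ) * ((μ : ℂ) - 1) * (κ ^ 2 - lam ^ 2) - κ * ((μ : ℂ) + 1)) *
      ((p : ℂ) * (κ ^ 2 - lam ^ 2) - κ))
    (ha₂ : a₂ = (((μ : ℂ) - 1) / (4 * κ ^ 2)) *
      ((p : ℂ) * ((μ : ℂ) - 1) * (κ ^ 2 - lam ^ 2) + κ * ((μ : ℂ) + 1)) *
      ((p : ℂ) * (κ ^ 2 - lam ^ 2) + κ)) :
    a₁ ∉ Set.range (Complex.ofReal) ∧ a₂ ∉ Set.range (Complex.ofReal) ∧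
    I * (a₁.im : ℂ) = ((μ : ℂ) ^ 2 * (1 - (μ : ℂ)) * (p : ℂ)) / (2 * (β : ℂ) * κ) ∧
    -(I * (a₂.im : ℂ)) = ((μ : ℂ) ^ 2 * (1 - (μ : ℂ)) * (p : ℂ)) / (2 * (β : ℂ) * κ) ∧
    ((μ : ℂ) ^ 2 * (1 - (μ : ℂ)) * (p : ℂ)) / (2 * (β : ℂ) * κ) ≠ 0 := by
  have hβ : β ≠ 0 := by
    intro h; rw [h] at hμβ; simp at hμβ
  have hβC : (β : ℂ) ≠ 0 := ofReal_ne_zero.2 hβ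
  -- c := μ*(2ε+1)/β < 0
  have hc : μ * (2 * ε + 1) / β < 0 := by
    have h1 : 2 * ε + 1 < 0 := by linarith
    have : μ * (2 * ε + 1) / β = (μ / β) * (2 * ε + 1) := by ring
    rw [this]
    exact mul_neg_of_pos_of_neg hμβ h1
  have hκ' : κ ^ 2 = ((μ * (2 * ε + 1) / β : ℝ) : ℂ) := by
    rw [hκ]; push_cast; ring
  -- κ is purely imaginary
  have him0 : κ.re * κ.im + κ.im * κ.re = 0 := by
    have := congrArg Complex.im hκ'
    simpa [pow_two, Complex.mul_im] using this
  have hre2 : κ.re * κ.re - κ.im * κ.im = μ * (2 * ε + 1) / β := by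
    have := congrArg Complex.re hκ'
    simpa [pow_two, Complex.mul_re] using this
  have hre : κ.re = 0 := by
    by_contra h
    have him : κ.im = 0 := by
      have : κ.re * κ.im = 0 := by linarith [him0]
      rcases mul_eq_zero.1 this with h' | h'
      · exact absurd h' h
      · exact h'
    rw [him] at hre2
    nlinarith
  set t : ℝ := κ.im with htdef
  have ht0 : t ≠ 0 := by
    intro h
    rw [hre, h] at hre2
    nlinarith
  have hκt : κ = (t : ℂ) * I := by
    apply Complex.ext <;> simp [hre, htdef]
  have htC : (t : ℂ) ≠ 0 := ofReal_ne_zero.2 ht0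
  -- κ² - λ² = μ/β  (real)
  have hA : κ ^ 2 - lam ^ 2 = ((μ / β : ℝ) : ℂ) := by
    rw [hκ, hlam]; push_cast; field_simp; ring
  have hκ2 : κ ^ 2 = -((t : ℂ) ^ 2) := by
    rw [hκt]; rw [mul_pow, I_sq]; ring
  set A : ℝ := μ / β with hAdef
  have hAne : A ≠ 0 := ne_of_gt hμβ
  -- explicit real/imaginary decompositions
  set Y : ℝ := μ * (μ - 1) * p * A / (2 * t) with hYdef
  set X₁ : ℝ := (μ - 1) * (p ^ 2 * (μ - 1) * A ^ 2 - t ^ 2 * (μ + 1)) / (-4 * t ^ 2) with hX1def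
  have key₁ : a₁ = (X₁ : ℂ) + (Y : ℂ) * I := by
    rw [ha₁, hA, hκ2, hκt, hX1def, hYdef]
    push_cast
    field_simp
    linear_combination (2*(t:ℂ)^2*(1-(μ:ℂ)^2)) * I_sq
  have key₂ : a₂ = (X₁ : ℂ) + (-Y : ℂ) * I := by
    rw [ha₂, hA, hκ2, hκt, hX1def, hYdef]
    push_cast
    field_simp
    linear_combination (2*(t:ℂ)^2*(1-(μ:ℂ)^2)) * I_sq
  have hYne : Y ≠ 0 := by
    rw [hYdef]
    apply div_ne_zero
    · exact mul_ne_zero (mul_ne_zero (mul_ne_zero hμ (sub_ne_zero.2 hμ1)) hp) hAne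
    · intro h; apply ht0; linarith
  have hima₁ : a₁.im = Y := by rw [key₁]; simp
  have hima₂ : a₂.im = -Y := by rw [key₂]; simp
  have hRHS : I * (Y : ℂ) = ((μ : ℂ) ^ 2 * (1 - (μ : ℂ)) * (p : ℂ)) / (2 * (β : ℂ) * κ) := by
    rw [hκt, hYdef, hAdef]
    push_cast
    field_simp
    linear_combination ((μ:ℂ)^2*(p:ℂ)*((μ:ℂ)-1)) * I_sq
  refine ⟨?_, ?_, ?_, ?_, ?_⟩
  · rintro ⟨r, hr⟩
    apply hYne
    rw [← hima₁, ← hr]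
    simp
  · rintro ⟨r, hr⟩
    apply hYne
    have : a₂.im = 0 := by rw [← hr]; simp
    rw [hima₂] at this; linarith
  · rw [hima₁]; exact hRHS
  · rw [hima₂]; push_cast; rw [mul_neg, neg_neg]; exact hRHS
  · rw [← hRHS]
    exact mul_ne_zero I_ne_zero (ofReal_ne_zero.2 hYne)
end

section
/- Let β, ε, μ, p be real numbers with p ≠ 0, μ ≠ 0, μ ≠ 1, μ/β > 0, and ε < 1/2. Let κ, λ ∈ ℂ satisfy κ² = μ(2ε−1)/β and λ² = 2με/β (so κ is nonzero purely imaginary and λ² is real). Then neither of the two complex numbers α₁ = ((μ−1)/(4κ²))·(p(μ−1)(κ²−λ²) + κ(μ+1))·(p(κ²−λ²) + κ) and α₂ = ((μ−1)/(4κ²))·(p(μ−1)(κ²−λ²) − κ(μ+1))·(p(κ²−λ²) − κ) is a real number; in fact i·Im α₁ = −i·Im α₂ = μ²(1−μ)p/(2βκ) ≠ 0. -/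
open Complex

/-- The two double-pole coefficients at `±κ` of the normal variational equation of
the reduced two-body problem on the hyperbolic plane `H²` with the oscillator
potential are non-real, with explicit imaginary parts. -/
theorem stmt_5 (β ε μ p : ℝ) (hp : p ≠ 0) (hμ : μ ≠ 0) (hμ1 : μ ≠ 1)
    (hμβ : μ / β > 0) (hε : ε < 1/2)
    (κ lam : ℂ)
    (hκ : κ ^ 2 = ((μ : ℂ) * (2 * (ε : ℂ) - 1)) / (β : ℂ))
    (hlam : lam ^ 2 = (2 * (μ : ℂ) * (ε : ℂ)) / (β : ℂ))
    (a₁ a₂ : ℂ)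
    (ha₁ : a₁ = (((μ : ℂ) - 1) / (4 * κ ^ 2)) *
      ((p : ℂ) * ((μ : ℂ) - 1) * (κ ^ 2 - lam ^ 2) + κ * ((μ : ℂ) + 1)) *
      ((p : ℂ) * (κ ^ 2 - lam ^ 2) + κ))
    (ha₂ : a₂ = (((μ : ℂ) - 1) / (4 * κ ^ 2)) *
      ((p : ℂ) * ((μ : ℂ) - 1) * (κ ^ 2 - lam ^ 2) - κ * ((μ : ℂ) + 1)) *
      ((p : ℂ) * (κ ^ 2 - lam ^ 2) - κ)) :
    a₁ ∉ Set.range (Complex.ofReal) ∧ a₂ ∉ Set.range (Complex.ofReal) ∧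
    I * (a₁.im : ℂ) = ((μ : ℂ) ^ 2 * (1 - (μ : ℂ)) * (p : ℂ)) / (2 * (β : ℂ) * κ) ∧
    -(I * (a₂.im : ℂ)) = ((μ : ℂ) ^ 2 * (1 - (μ : ℂ)) * (p : ℂ)) / (2 * (β : ℂ) * κ) ∧
    ((μ : ℂ) ^ 2 * (1 - (μ : ℂ)) * (p : ℂ)) / (2 * (β : ℂ) * κ) ≠ 0 := by
  have hβ : β ≠ 0 := by
    rintro rfl; simp at hμβ
  have hβc : (β : ℂ) ≠ 0 := Complex.ofReal_ne_zero.mpr hβ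
  have hneg : μ * (2 * ε - 1) / β < 0 := by
    have h1 : 2 * ε - 1 < 0 := by linarith
    have h2 : μ * (2 * ε - 1) / β = (μ / β) * (2 * ε - 1) := by ring
    rw [h2]
    exact mul_neg_of_pos_of_neg hμβ h1
  -- κ² is the cast of a real number
  have hκ2 : κ ^ 2 = ((μ * (2 * ε - 1) / β : ℝ) : ℂ) := by
    rw [hκ]; push_cast; ring
  have him0 : κ.re * κ.im + κ.im * κ.re = 0 := by
    have h := congrArg Complex.im hκ2
    simpa [pow_two, Complex.mul_im] using h
  have hre0 : κ.re * κ.re - κ.im * κ.im = μ * (2 * ε - 1) / β := by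
    have h := congrArg Complex.re hκ2
    simpa [pow_two, Complex.mul_re] using h
  have hκre : κ.re = 0 := by
    by_contra h
    have h2 : κ.im = 0 := by
      rcases mul_eq_zero.mp (show κ.re * κ.im = 0 by linarith) with h' | h'
      · exact absurd h' h
      · exact h'
    rw [h2] at hre0
    nlinarith [mul_self_nonneg κ.re]
  have hyne : κ.im ≠ 0 := by
    intro h0
    rw [hκre, h0] at hre0
    nlinarith
  set y : ℝ := κ.im with hy
  have hκy : κ = (y : ℂ) * I := by
    apply Complex.ext <;> simp [hκre, hy]
  have hyc : (y : ℂ) ≠ 0 := Complex.ofReal_ne_zero.mpr hyne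
  have hκ0 : κ ≠ 0 := by
    rw [hκy]; exact mul_ne_zero hyc I_ne_zero
  -- κ² − λ² = −μ/β
  have hcl : κ ^ 2 - lam ^ 2 = -((μ : ℂ) / (β : ℂ)) := by
    rw [hκ, hlam]; field_simp; ring
  have hκsq : κ ^ 2 = -((y : ℂ) ^ 2) := by
    rw [hκy, mul_pow, I_sq]; ring
  -- explicit real/imaginary decompositions
  set Ta : ℝ := -(μ ^ 2 * (1 - μ) * p) / (2 * β * y) with hTa
  set Ra : ℝ := ((μ - 1) * (p ^ 2 * (μ - 1) * μ ^ 2 / β ^ 2 - y ^ 2 * (μ + 1))) / (-4 * y ^ 2) with hRa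
  have hD : (4 : ℂ) * (y : ℂ) ^ 2 * (β : ℂ) ^ 2 ≠ 0 := by
    refine mul_ne_zero (mul_ne_zero (by norm_num) (pow_ne_zero 2 hyc)) (pow_ne_zero 2 hβc)
  set NR : ℂ := -(((μ:ℂ) - 1) * ((p:ℂ) ^ 2 * (μ:ℂ) ^ 2 * ((μ:ℂ) - 1)
      - (β:ℂ) ^ 2 * (y:ℂ) ^ 2 * ((μ:ℂ) + 1))) with hNR
  set NI : ℂ := 2 * (p:ℂ) * (μ:ℂ) ^ 2 * ((μ:ℂ) - 1) * (β:ℂ) * (y:ℂ) with hNI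
  have hRT : NR + NI * I = ((Ra : ℂ) + (Ta : ℂ) * I) * (4 * (y:ℂ) ^ 2 * (β:ℂ) ^ 2) := by
    rw [hRa, hTa, hNR, hNI]
    push_cast
    field_simp [hβc, hyc]
    ring
  have ha1' : a₁ = (Ra : ℂ) + (Ta : ℂ) * I := by
    apply mul_right_cancel₀ hD
    rw [← hRT, ha₁, hcl, hκsq, hκy]
    have step : ((((μ:ℂ) - 1) / (4 * -(y:ℂ) ^ 2)) *
        ((p:ℂ) * ((μ:ℂ) - 1) * (-((μ:ℂ) / (β:ℂ))) + ((y:ℂ) * I) * ((μ:ℂ) + 1)) *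
        ((p:ℂ) * (-((μ:ℂ) / (β:ℂ))) + (y:ℂ) * I)) * (4 * (y:ℂ) ^ 2 * (β:ℂ) ^ 2)
        = -(((μ:ℂ) - 1)) * (-(p:ℂ) * (μ:ℂ) * ((μ:ℂ) - 1) + (β:ℂ) * (y:ℂ) * I * ((μ:ℂ) + 1))
          * (-(p:ℂ) * (μ:ℂ) + (β:ℂ) * (y:ℂ) * I) := by
      field_simp [hβc, hyc]
    rw [step, hNR, hNI]
    linear_combination (-(((μ:ℂ) - 1) * ((β:ℂ) ^ 2 * (y:ℂ) ^ 2 * ((μ:ℂ) + 1))) * Complex.I_sq)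
  have ha2' : a₂ = (Ra : ℂ) + (-Ta : ℂ) * I := by
    apply mul_right_cancel₀ hD
    have hRT2 : NR + (-NI) * I = ((Ra : ℂ) + (-Ta : ℂ) * I) * (4 * (y:ℂ) ^ 2 * (β:ℂ) ^ 2) := by
      rw [hRa, hTa, hNR, hNI]
      push_cast
      field_simp [hβc, hyc]
      ring
    rw [← hRT2, ha₂, hcl, hκsq, hκy]
    have step : ((((μ:ℂ) - 1) / (4 * -(y:ℂ) ^ 2)) *
        ((p:ℂ) * ((μ:ℂ) - 1) * (-((μ:ℂ) / (β:ℂ))) - ((y:ℂ) * I) * ((μ:ℂ) + 1)) *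
        ((p:ℂ) * (-((μ:ℂ) / (β:ℂ))) - (y:ℂ) * I)) * (4 * (y:ℂ) ^ 2 * (β:ℂ) ^ 2)
        = -(((μ:ℂ) - 1)) * (-(p:ℂ) * (μ:ℂ) * ((μ:ℂ) - 1) - (β:ℂ) * (y:ℂ) * I * ((μ:ℂ) + 1))
          * (-(p:ℂ) * (μ:ℂ) - (β:ℂ) * (y:ℂ) * I) := by
      field_simp [hβc, hyc]
    rw [step, hNR, hNI]
    linear_combination (-(((μ:ℂ) - 1) * ((β:ℂ) ^ 2 * (y:ℂ) ^ 2 * ((μ:ℂ) + 1))) * Complex.I_sq)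
  have hTa0 : Ta ≠ 0 := by
    rw [hTa]
    apply div_ne_zero
    · simp only [neg_ne_zero]
      exact mul_ne_zero (mul_ne_zero (pow_ne_zero 2 hμ) (sub_ne_zero.mpr (Ne.symm hμ1))) hp
    · exact mul_ne_zero (mul_ne_zero two_ne_zero hβ) hyne
  have him1 : a₁.im = Ta := by
    rw [ha1']
    simp only [Complex.add_im, Complex.ofReal_im, Complex.mul_im, Complex.ofReal_re,
      Complex.I_re, Complex.I_im]
    ring
  have him2 : a₂.im = -Ta := by
    rw [ha2']
    simp only [Complex.add_im, Complex.ofReal_im, Complex.ofReal_neg, Complex.neg_im,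
      Complex.mul_im, Complex.ofReal_re, Complex.neg_re, Complex.I_re, Complex.I_im]
    ring
  have hrhs : ((μ : ℂ) ^ 2 * (1 - (μ : ℂ)) * (p : ℂ)) / (2 * (β : ℂ) * κ) = I * (Ta : ℂ) := by
    rw [hκy, hTa]
    push_cast
    rw [div_eq_iff (mul_ne_zero (mul_ne_zero two_ne_zero hβc) (mul_ne_zero hyc I_ne_zero))]
    have h2βy : (2 : ℂ) * (β : ℂ) * (y : ℂ) ≠ 0 :=
      mul_ne_zero (mul_ne_zero two_ne_zero hβc) hyc
    field_simp [hβc, hyc]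
    linear_combination ((μ:ℂ) ^ 2 * (1 - (μ:ℂ)) * (p:ℂ)) * Complex.I_sq
  refine ⟨?_, ?_, ?_, ?_, ?_⟩
  · rintro ⟨r, hr⟩
    have h0 : a₁.im = 0 := by rw [← hr]; simp
    rw [him1] at h0; exact hTa0 h0
  · rintro ⟨r, hr⟩
    have h0 : a₂.im = 0 := by rw [← hr]; simp
    rw [him2] at h0; exact hTa0 (neg_eq_zero.mp h0)
  · rw [him1, hrhs]
  · rw [him2, hrhs]; push_cast; ring
  · rw [hrhs]
    intro h
    rcases mul_eq_zero.mp h with h | h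
    · exact I_ne_zero h
    · exact hTa0 (Complex.ofReal_eq_zero.mp h)
end

section
/- Let α, ε, μ, p be real numbers with α ≠ 0, μ ≠ 0, μ ≠ 1, p ≠ 0, let κ ∈ ℂ satisfy κ² = (2μ/α)(ε+i) and λ ∈ ℂ satisfy λ² = (2μ/α)(ε−i), and define f(z) = αz²/(2μ) − ε, A(z) = p·f(z)/(1+f(z)²), B(z) = p/μ − (αz+(2−μ)p)/(1+f(z)²), C(z) = (αz−μp)/(1+f(z)²), and r(z) = (C'/C)·A + A² + C·B − A' − (1/2)(C'/C)' + (1/4)(C'/C)². Then (z−κ)²·r(z) tends, as z → κ, to α₁ = ((1−μ)/(64κ²))·(p(μ−1)(λ²−κ²) + 4iκ(μ+1))·(p(λ²−κ²) + 4iκ); that is, r has a double pole at z = κ with leading Laurent coefficient α₁. -/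
open Complex

private lemma stmt7_key (m a pp F Fd Dd Dd2 G w Q E : ℂ) (hm : m ≠ 0) (hw : w ≠ 0) (hQ : Q ≠ 0) (hE : E ≠ 0) :
    w ^ 2 * ((a / Q - Dd / (w * E)) * (pp * F / (w * E)) + (pp * F / (w * E)) ^ 2
      + Q / (w * E) * (pp / m - G / (w * E))
      - (pp * Fd * (w * E) - pp * F * Dd) / (w * E) ^ 2
      - 1 / 2 * (-a ^ 2 / Q ^ 2 - (Dd2 * (w * E) - Dd * Dd) / (w * E) ^ 2)
      + 1 / 4 * (a / Q - Dd / (w * E)) ^ 2)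
    = (4 * m * a * pp * F * w * Q * E - 4 * m * pp * F * Dd * Q ^ 2
      + 4 * m * pp ^ 2 * F ^ 2 * Q ^ 2 + 4 * pp * Q ^ 3 * w * E - 4 * m * Q ^ 3 * G
      - 4 * m * Q ^ 2 * (pp * Fd * w * E - pp * F * Dd) + 2 * m * a ^ 2 * w ^ 2 * E ^ 2
      + 2 * m * Q ^ 2 * (Dd2 * w * E - Dd * Dd) + m * (a * w * E - Dd * Q) ^ 2)
      / (4 * m * Q ^ 2 * E ^ 2) := by
  have k1 : w ^ 2 * ((a / Q - Dd / (w * E)) * (pp * F / (w * E)))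
      = (4 * m * a * pp * F * w * Q * E - 4 * m * pp * F * Dd * Q ^ 2) / (4 * m * Q ^ 2 * E ^ 2) := by
    field_simp
  have k2 : w ^ 2 * (pp * F / (w * E)) ^ 2
      = (4 * m * pp ^ 2 * F ^ 2 * Q ^ 2) / (4 * m * Q ^ 2 * E ^ 2) := by
    field_simp
  have k3 : w ^ 2 * (Q / (w * E) * (pp / m - G / (w * E)))
      = (4 * pp * Q ^ 3 * w * E - 4 * m * Q ^ 3 * G) / (4 * m * Q ^ 2 * E ^ 2) := by
    field_simp
  have k4 : w ^ 2 * ((pp * Fd * (w * E) - pp * F * Dd) / (w * E) ^ 2)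
      = (4 * m * Q ^ 2 * (pp * Fd * w * E - pp * F * Dd)) / (4 * m * Q ^ 2 * E ^ 2) := by
    field_simp
  have k5 : w ^ 2 * (1 / 2 * (-a ^ 2 / Q ^ 2 - (Dd2 * (w * E) - Dd * Dd) / (w * E) ^ 2))
      = (-(2 * m * a ^ 2 * w ^ 2 * E ^ 2) - 2 * m * Q ^ 2 * (Dd2 * w * E - Dd * Dd))
        / (4 * m * Q ^ 2 * E ^ 2) := by
    field_simp
    ring
  have k6 : w ^ 2 * (1 / 4 * (a / Q - Dd / (w * E)) ^ 2)
      = (m * (a * w * E - Dd * Q) ^ 2) / (4 * m * Q ^ 2 * E ^ 2) := by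
    field_simp
  calc w ^ 2 * ((a / Q - Dd / (w * E)) * (pp * F / (w * E)) + (pp * F / (w * E)) ^ 2
      + Q / (w * E) * (pp / m - G / (w * E))
      - (pp * Fd * (w * E) - pp * F * Dd) / (w * E) ^ 2
      - 1 / 2 * (-a ^ 2 / Q ^ 2 - (Dd2 * (w * E) - Dd * Dd) / (w * E) ^ 2)
      + 1 / 4 * (a / Q - Dd / (w * E)) ^ 2)
      = w ^ 2 * ((a / Q - Dd / (w * E)) * (pp * F / (w * E))) + w ^ 2 * (pp * F / (w * E)) ^ 2
        + w ^ 2 * (Q / (w * E) * (pp / m - G / (w * E)))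
        - w ^ 2 * ((pp * Fd * (w * E) - pp * F * Dd) / (w * E) ^ 2)
        - w ^ 2 * (1 / 2 * (-a ^ 2 / Q ^ 2 - (Dd2 * (w * E) - Dd * Dd) / (w * E) ^ 2))
        + w ^ 2 * (1 / 4 * (a / Q - Dd / (w * E)) ^ 2) := by ring
    _ = _ := by
        rw [k1, k2, k3, k4, k5, k6, ← add_div, ← add_div, ← sub_div,
          ← sub_div, ← add_div]
        congr 1
        ring

set_option maxHeartbeats 1000000 in
/-- The potential `r(z)` of the second-order equation obtained from the normal
variational equations (sphere, Newton potential) has a double pole at `z = κ`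
with leading Laurent coefficient `α₁`. -/
theorem stmt_7 (α ε μ p : ℝ) (hα : α ≠ 0) (hμ : μ ≠ 0) (hμ1 : μ ≠ 1) (hp : p ≠ 0)
    (κ lam : ℂ)
    (hκ : κ ^ 2 = (2 * (μ : ℂ) / (α : ℂ)) * ((ε : ℂ) + I))
    (hlam : lam ^ 2 = (2 * (μ : ℂ) / (α : ℂ)) * ((ε : ℂ) - I))
    (f A B C g r : ℂ → ℂ)
    (hf : ∀ z, f z = (α : ℂ) * z ^ 2 / (2 * (μ : ℂ)) - (ε : ℂ))
    (hA : ∀ z, A z = (p : ℂ) * f z / (1 + (f z) ^ 2))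
    (hB : ∀ z, B z = (p : ℂ) / (μ : ℂ) - ((α : ℂ) * z + (2 - (μ : ℂ)) * (p : ℂ)) / (1 + (f z) ^ 2))
    (hC : ∀ z, C z = ((α : ℂ) * z - (μ : ℂ) * (p : ℂ)) / (1 + (f z) ^ 2))
    (hg : ∀ z, g z = deriv C z / C z)
    (hr : ∀ z, r z = g z * A z + (A z) ^ 2 + C z * B z - deriv A z
      - (1/2) * deriv g z + (1/4) * (g z) ^ 2)
    (a₁ : ℂ)
    (ha₁ : a₁ = ((1 - (μ : ℂ)) / (64 * κ ^ 2)) *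
      ((p : ℂ) * ((μ : ℂ) - 1) * (lam ^ 2 - κ ^ 2) + 4 * I * κ * ((μ : ℂ) + 1)) *
      ((p : ℂ) * (lam ^ 2 - κ ^ 2) + 4 * I * κ)) :
    Filter.Tendsto (fun z : ℂ => (z - κ) ^ 2 * r z) (nhdsWithin κ {κ}ᶜ) (nhds a₁) := by
  have hα' : (α : ℂ) ≠ 0 := Complex.ofReal_ne_zero.mpr hα
  have hμ' : (μ : ℂ) ≠ 0 := Complex.ofReal_ne_zero.mpr hμ
  have h2μ : (2 * (μ : ℂ)) ≠ 0 := mul_ne_zero two_ne_zero hμ'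
  set c : ℂ := (α : ℂ) / (2 * (μ : ℂ)) with hc
  clear_value c
  have hcne : c ≠ 0 := by rw [hc]; exact div_ne_zero hα' h2μ
  -- basic consequences of hκ, hlam
  have hκ2 : c * κ ^ 2 = (ε : ℂ) + I := by
    rw [hκ, hc]; field_simp
  have hlam2 : c * lam ^ 2 = (ε : ℂ) - I := by
    rw [hlam, hc]; field_simp
  have hfc : ∀ z, f z = c * z ^ 2 - (ε : ℂ) := by
    intro z; rw [hf, hc]; ring
  have hDfact : ∀ z : ℂ, 1 + (c * z ^ 2 - (ε : ℂ)) ^ 2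
      = c ^ 2 * (z ^ 2 - κ ^ 2) * (z ^ 2 - lam ^ 2) := by
    intro z
    linear_combination (c * z ^ 2 - c * lam ^ 2) * hκ2 + (c * z ^ 2 - (ε:ℂ) - I) * hlam2 + Complex.I_sq
  have hDfact2 : ∀ z : ℂ, 1 + (c * z ^ 2 - (ε : ℂ)) ^ 2
      = (z - κ) * (c ^ 2 * (z + κ) * (z ^ 2 - lam ^ 2)) := by
    intro z; rw [hDfact z]; ring
  -- κ is non-real, hence various nonvanishing facts
  have him : (κ ^ 2).im ≠ 0 := by
    have h1 : (2 * (μ:ℂ) / (α:ℂ)) * ((ε:ℂ) + I) = ((2*μ/α : ℝ) : ℂ) * ((ε:ℂ) + I) := by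
      push_cast; ring
    rw [hκ, h1, Complex.im_ofReal_mul]
    have : ((ε:ℂ) + I).im = 1 := by simp
    rw [this, mul_one]
    exact div_ne_zero (mul_ne_zero two_ne_zero hμ) hα
  have hκ0 : κ ≠ 0 := by
    intro h; apply him; rw [h]; simp
  have hκκ : κ + κ ≠ 0 := by
    intro h
    apply hκ0
    have : (2:ℂ) * κ = 0 := by linear_combination h
    exact (mul_eq_zero.mp this).resolve_left two_ne_zero
  have hdiff : lam ^ 2 - κ ^ 2 = -(4 * I * (μ:ℂ) / (α:ℂ)) := by
    rw [hκ, hlam]; field_simp; ring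
  have hdiff2 : κ ^ 2 - lam ^ 2 = 4 * I * (μ:ℂ) / (α:ℂ) := by
    linear_combination -hdiff
  have hklam : κ ^ 2 - lam ^ 2 ≠ 0 := by
    rw [hdiff2]
    exact div_ne_zero (mul_ne_zero (mul_ne_zero (by norm_num) Complex.I_ne_zero) hμ') hα'
  have hqκ : (α:ℂ) * κ - (μ:ℂ) * (p:ℂ) ≠ 0 := by
    intro h
    have hκval : κ = ((μ * p / α : ℝ) : ℂ) := by
      push_cast
      field_simp
      linear_combination h
    apply him
    have : κ.im = 0 := by rw [hκval]; exact Complex.ofReal_im _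
    rw [sq, Complex.mul_im, this]; ring
  -- derivative building blocks
  have hfd : ∀ z : ℂ, HasDerivAt (fun w : ℂ => c * w ^ 2 - (ε:ℂ)) (2 * c * z) z := by
    intro z
    have h := ((hasDerivAt_pow 2 z).const_mul c).sub_const (ε:ℂ)
    refine h.congr_deriv ?_
    norm_num; ring
  have hDd : ∀ z : ℂ, HasDerivAt (fun w : ℂ => 1 + (c * w ^ 2 - (ε:ℂ)) ^ 2)
      (4 * c * z * (c * z ^ 2 - (ε:ℂ))) z := by
    intro z
    have h := ((hfd z).pow 2).const_add 1
    refine h.congr_deriv ?_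
    norm_num; ring
  have hqd : ∀ z : ℂ, HasDerivAt (fun w : ℂ => (α:ℂ) * w - (μ:ℂ) * (p:ℂ)) (α:ℂ) z := by
    intro z
    simpa using ((hasDerivAt_id z).const_mul (α:ℂ)).sub_const ((μ:ℂ) * (p:ℂ))
  have hDdd : ∀ z : ℂ, HasDerivAt (fun w : ℂ => 4 * c * w * (c * w ^ 2 - (ε:ℂ)))
      (12 * c ^ 2 * z ^ 2 - 4 * c * (ε:ℂ)) z := by
    intro z
    have h1 : (fun w : ℂ => 4 * c * w * (c * w ^ 2 - (ε:ℂ)))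
        = fun w => 4 * c ^ 2 * w ^ 3 - 4 * c * (ε:ℂ) * w := by funext w; ring
    rw [h1]
    have h := ((hasDerivAt_pow 3 z).const_mul (4 * c ^ 2)).sub
      ((hasDerivAt_id z).const_mul (4 * c * (ε:ℂ)))
    refine h.congr_deriv ?_
    norm_num; ring
  have hAfun : A = fun w : ℂ => (p:ℂ) * (c * w ^ 2 - (ε:ℂ)) / (1 + (c * w ^ 2 - (ε:ℂ)) ^ 2) :=
    funext fun w => by rw [hA, hfc]
  have hCfun : C = fun w : ℂ => ((α:ℂ) * w - (μ:ℂ) * (p:ℂ)) / (1 + (c * w ^ 2 - (ε:ℂ)) ^ 2) :=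
    funext fun w => by rw [hC, hfc]
  have hAd : ∀ z : ℂ, 1 + (c * z ^ 2 - (ε:ℂ)) ^ 2 ≠ 0 →
      deriv A z = ((p:ℂ) * (2 * c * z) * (1 + (c * z ^ 2 - (ε:ℂ)) ^ 2)
        - (p:ℂ) * (c * z ^ 2 - (ε:ℂ)) * (4 * c * z * (c * z ^ 2 - (ε:ℂ))))
        / (1 + (c * z ^ 2 - (ε:ℂ)) ^ 2) ^ 2 := by
    intro z hz
    rw [hAfun]
    exact (((hfd z).const_mul (p:ℂ)).div (hDd z) hz).deriv
  have hCd : ∀ z : ℂ, 1 + (c * z ^ 2 - (ε:ℂ)) ^ 2 ≠ 0 →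
      deriv C z = ((α:ℂ) * (1 + (c * z ^ 2 - (ε:ℂ)) ^ 2)
        - ((α:ℂ) * z - (μ:ℂ) * (p:ℂ)) * (4 * c * z * (c * z ^ 2 - (ε:ℂ))))
        / (1 + (c * z ^ 2 - (ε:ℂ)) ^ 2) ^ 2 := by
    intro z hz
    rw [hCfun]
    exact ((hqd z).div (hDd z) hz).deriv
  have hgval : ∀ z : ℂ, 1 + (c * z ^ 2 - (ε:ℂ)) ^ 2 ≠ 0 → (α:ℂ) * z - (μ:ℂ) * (p:ℂ) ≠ 0 →
      g z = (α:ℂ) / ((α:ℂ) * z - (μ:ℂ) * (p:ℂ))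
        - (4 * c * z * (c * z ^ 2 - (ε:ℂ))) / (1 + (c * z ^ 2 - (ε:ℂ)) ^ 2) := by
    intro z h1 h2
    rw [hg, hCd z h1, hC, hfc]
    field_simp
  have hgd : ∀ z : ℂ, 1 + (c * z ^ 2 - (ε:ℂ)) ^ 2 ≠ 0 → (α:ℂ) * z - (μ:ℂ) * (p:ℂ) ≠ 0 →
      deriv g z = -(α:ℂ) ^ 2 / ((α:ℂ) * z - (μ:ℂ) * (p:ℂ)) ^ 2
        - ((12 * c ^ 2 * z ^ 2 - 4 * c * (ε:ℂ)) * (1 + (c * z ^ 2 - (ε:ℂ)) ^ 2)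
          - (4 * c * z * (c * z ^ 2 - (ε:ℂ))) * (4 * c * z * (c * z ^ 2 - (ε:ℂ))))
          / (1 + (c * z ^ 2 - (ε:ℂ)) ^ 2) ^ 2 := by
    intro z h1 h2
    have hopen : IsOpen {w : ℂ | 1 + (c * w ^ 2 - (ε:ℂ)) ^ 2 ≠ 0 ∧ (α:ℂ) * w - (μ:ℂ) * (p:ℂ) ≠ 0} := by
      have heq : {w : ℂ | 1 + (c * w ^ 2 - (ε:ℂ)) ^ 2 ≠ 0 ∧ (α:ℂ) * w - (μ:ℂ) * (p:ℂ) ≠ 0}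
          = (fun w : ℂ => 1 + (c * w ^ 2 - (ε:ℂ)) ^ 2) ⁻¹' {0}ᶜ
            ∩ (fun w : ℂ => (α:ℂ) * w - (μ:ℂ) * (p:ℂ)) ⁻¹' {0}ᶜ := rfl
      rw [heq]
      exact (isOpen_compl_singleton.preimage (by fun_prop)).inter
        (isOpen_compl_singleton.preimage (by fun_prop))
    have hev : g =ᶠ[nhds z] fun w : ℂ => (α:ℂ) / ((α:ℂ) * w - (μ:ℂ) * (p:ℂ))
        - (4 * c * w * (c * w ^ 2 - (ε:ℂ))) / (1 + (c * w ^ 2 - (ε:ℂ)) ^ 2) :=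
      Filter.eventuallyEq_of_mem (hopen.mem_nhds ⟨h1, h2⟩) fun w hw => hgval w hw.1 hw.2
    rw [hev.deriv_eq]
    have h := (((hasDerivAt_const z (α:ℂ)).div (hqd z) h2)).sub ((hDdd z).div (hDd z) h1)
    exact h.deriv.trans (by ring)
  -- numerator and denominator of the limit function
  set n : ℂ → ℂ := fun z =>
    4 * (μ:ℂ) * (α:ℂ) * (p:ℂ) * (c*z^2-(ε:ℂ)) * (z-κ) * ((α:ℂ)*z-(μ:ℂ)*(p:ℂ)) * (c^2*(z+κ)*(z^2-lam^2))
    - 4 * (μ:ℂ) * (p:ℂ) * (c*z^2-(ε:ℂ)) * (4*c*z*(c*z^2-(ε:ℂ))) * ((α:ℂ)*z-(μ:ℂ)*(p:ℂ)) ^ 2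
    + 4 * (μ:ℂ) * (p:ℂ) ^ 2 * (c*z^2-(ε:ℂ)) ^ 2 * ((α:ℂ)*z-(μ:ℂ)*(p:ℂ)) ^ 2
    + 4 * (p:ℂ) * ((α:ℂ)*z-(μ:ℂ)*(p:ℂ)) ^ 3 * (z-κ) * (c^2*(z+κ)*(z^2-lam^2))
    - 4 * (μ:ℂ) * ((α:ℂ)*z-(μ:ℂ)*(p:ℂ)) ^ 3 * ((α:ℂ)*z+(2-(μ:ℂ))*(p:ℂ))
    - 4 * (μ:ℂ) * ((α:ℂ)*z-(μ:ℂ)*(p:ℂ)) ^ 2 * ((p:ℂ)*(2*c*z)*(z-κ)*(c^2*(z+κ)*(z^2-lam^2)) - (p:ℂ)*(c*z^2-(ε:ℂ))*(4*c*z*(c*z^2-(ε:ℂ))))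
    + 2 * (μ:ℂ) * (α:ℂ) ^ 2 * (z-κ) ^ 2 * (c^2*(z+κ)*(z^2-lam^2)) ^ 2
    + 2 * (μ:ℂ) * ((α:ℂ)*z-(μ:ℂ)*(p:ℂ)) ^ 2 * ((12*c^2*z^2-4*c*(ε:ℂ))*(z-κ)*(c^2*(z+κ)*(z^2-lam^2)) - (4*c*z*(c*z^2-(ε:ℂ)))*(4*c*z*(c*z^2-(ε:ℂ))))
    + (μ:ℂ) * ((α:ℂ)*(z-κ)*(c^2*(z+κ)*(z^2-lam^2)) - (4*c*z*(c*z^2-(ε:ℂ)))*((α:ℂ)*z-(μ:ℂ)*(p:ℂ))) ^ 2 with hn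
  set d : ℂ → ℂ := fun z =>
    4*(μ:ℂ)*((α:ℂ)*z-(μ:ℂ)*(p:ℂ))^2*(c^2*(z+κ)*(z^2-lam^2))^2 with hd
  clear_value n
  clear_value d
  -- the key pointwise identity
  have main : ∀ z : ℂ, z - κ ≠ 0 → z + κ ≠ 0 → z ^ 2 - lam ^ 2 ≠ 0 →
      (α:ℂ) * z - (μ:ℂ) * (p:ℂ) ≠ 0 → (z - κ) ^ 2 * r z = n z / d z := by
    intro z h1 h2 h3 h4
    have hz2 : z ^ 2 - κ ^ 2 ≠ 0 := by
      have hfac : z ^ 2 - κ ^ 2 = (z - κ) * (z + κ) := by ring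
      rw [hfac]; exact mul_ne_zero h1 h2
    have hDne : 1 + (c * z ^ 2 - (ε:ℂ)) ^ 2 ≠ 0 := by
      rw [hDfact z]
      exact mul_ne_zero (mul_ne_zero (pow_ne_zero 2 hcne) hz2) h3
    have hE' : c ^ 2 * (z + κ) * (z ^ 2 - lam ^ 2) ≠ 0 :=
      mul_ne_zero (mul_ne_zero (pow_ne_zero 2 hcne) h2) h3
    rw [hr, hgval z hDne h4, hgd z hDne h4, hAd z hDne, hA, hB, hC]
    simp only [hfc]
    rw [hDfact2 z]
    rw [stmt7_key (μ:ℂ) (α:ℂ) (p:ℂ) (c*z^2-(ε:ℂ)) (2*c*z) (4*c*z*(c*z^2-(ε:ℂ)))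
      (12*c^2*z^2-4*c*(ε:ℂ)) ((α:ℂ)*z+(2-(μ:ℂ))*(p:ℂ)) (z-κ) ((α:ℂ)*z-(μ:ℂ)*(p:ℂ))
      (c^2*(z+κ)*(z^2-lam^2)) hμ' h1 h4 hE']
    simp only [hn, hd]
  -- eventual equality on the punctured neighbourhood
  have hWev : ∀ᶠ z in nhdsWithin κ {κ}ᶜ, (z - κ) ^ 2 * r z = n z / d z := by
    have e2 : ∀ᶠ z in nhds κ, z + κ ≠ 0 :=
      ((continuous_id.add continuous_const).continuousAt).eventually_ne hκκ
    have e3 : ∀ᶠ z in nhds κ, z ^ 2 - lam ^ 2 ≠ 0 :=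
      (((continuous_pow 2).sub continuous_const).continuousAt).eventually_ne hklam
    have e4 : ∀ᶠ z in nhds κ, (α:ℂ) * z - (μ:ℂ) * (p:ℂ) ≠ 0 :=
      (((continuous_const.mul continuous_id).sub continuous_const).continuousAt).eventually_ne hqκ
    filter_upwards [nhdsWithin_le_nhds (e2.and (e3.and e4)), self_mem_nhdsWithin]
      with z hz hz'
    exact main z (sub_ne_zero.mpr hz') hz.1 hz.2.1 hz.2.2
  -- continuity of the limit function at κ
  have hEκ : c ^ 2 * (κ + κ) * (κ ^ 2 - lam ^ 2) ≠ 0 :=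
    mul_ne_zero (mul_ne_zero (pow_ne_zero 2 hcne) hκκ) hklam
  have hdκ0 : d κ ≠ 0 := by
    simp only [hd]
    exact mul_ne_zero (mul_ne_zero (mul_ne_zero (by norm_num) hμ') (pow_ne_zero 2 hqκ))
      (pow_ne_zero 2 hEκ)
  have hcont : Filter.Tendsto (fun z : ℂ => n z / d z) (nhdsWithin κ {κ}ᶜ) (nhds (n κ / d κ)) := by
    have hcn : Continuous n := by rw [hn]; fun_prop
    have hcd : Continuous d := by rw [hd]; fun_prop
    exact ((hcn.continuousAt.div hcd.continuousAt hdκ0).continuousWithinAt)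
  -- evaluate the limit
  have hI2 : c * κ ^ 2 - (ε:ℂ) = I := by linear_combination hκ2
  have h1 : (c * κ ^ 2 - (ε:ℂ)) ^ 2 = -1 := by rw [hI2]; exact Complex.I_sq
  have h2 : (4 * c * κ * (c * κ ^ 2 - (ε:ℂ))) ^ 2 = -(16 * c ^ 2 * κ ^ 2) := by
    rw [hI2]
    linear_combination (16 * c ^ 2 * κ ^ 2) * Complex.I_sq
  have hEκ2 : (c ^ 2 * (κ + κ) * (κ ^ 2 - lam ^ 2)) ^ 2 = -(4 * (α:ℂ)^2 * κ ^ 2 / (μ:ℂ)^2) := by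
    have hEval : c ^ 2 * (κ + κ) * (κ ^ 2 - lam ^ 2) = 2 * I * (α:ℂ) * κ / (μ:ℂ) := by
      rw [hdiff2, hc]; field_simp; ring
    rw [hEval]
    linear_combination (4 * (α:ℂ)^2 * κ ^ 2 / (μ:ℂ)^2) * Complex.I_sq
  have h2μinv : (2 * (μ:ℂ)) * (2 * (μ:ℂ))⁻¹ = 1 := mul_inv_cancel₀ h2μ
  have hμinv : ((μ:ℂ) ^ 2)⁻¹ * (μ:ℂ) ^ 2 = 1 := inv_mul_cancel₀ (pow_ne_zero 2 hμ')
  have hc2μ : (2 * (μ:ℂ)) * c = (α:ℂ) := by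
    rw [hc]; linear_combination (α:ℂ) * h2μinv
  have hκα : (α:ℂ) * κ ^ 2 = 2 * (μ:ℂ) * ((ε:ℂ) + I) := by
    linear_combination (2 * (μ:ℂ)) * hκ2 - κ ^ 2 * hc2μ
  have hlamα : (α:ℂ) * lam ^ 2 = 2 * (μ:ℂ) * ((ε:ℂ) - I) := by
    linear_combination (2 * (μ:ℂ)) * hlam2 - lam ^ 2 * hc2μ
  have hdiffα : (α:ℂ) * (lam ^ 2 - κ ^ 2) = -(4 * I * (μ:ℂ)) := by
    linear_combination hlamα - hκα
  have hXα : (α:ℂ) * ((p:ℂ) * ((μ:ℂ) - 1) * (lam ^ 2 - κ ^ 2) + 4 * I * κ * ((μ:ℂ) + 1))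
      = 4 * I * ((α:ℂ) * κ * ((μ:ℂ) + 1) - (μ:ℂ) * (p:ℂ) * ((μ:ℂ) - 1)) := by
    linear_combination ((p:ℂ) * ((μ:ℂ) - 1)) * hdiffα
  have hYα : (α:ℂ) * ((p:ℂ) * (lam ^ 2 - κ ^ 2) + 4 * I * κ)
      = 4 * I * ((α:ℂ) * κ - (μ:ℂ) * (p:ℂ)) := by
    linear_combination (p:ℂ) * hdiffα
  have hA1 : a₁ = ((1 - (μ:ℂ)) *
      ((p:ℂ) * ((μ:ℂ) - 1) * (lam ^ 2 - κ ^ 2) + 4 * I * κ * ((μ:ℂ) + 1)) *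
      ((p:ℂ) * (lam ^ 2 - κ ^ 2) + 4 * I * κ)) / (64 * κ ^ 2) := by
    rw [ha₁]; ring
  have h64 : (64 : ℂ) * κ ^ 2 ≠ 0 := mul_ne_zero (by norm_num) (pow_ne_zero 2 hκ0)
  have ha3 : a₁ * (64 * κ ^ 2) = (1 - (μ:ℂ)) *
      ((p:ℂ) * ((μ:ℂ) - 1) * (lam ^ 2 - κ ^ 2) + 4 * I * κ * ((μ:ℂ) + 1)) *
      ((p:ℂ) * (lam ^ 2 - κ ^ 2) + 4 * I * κ) := by
    rw [hA1]; exact div_mul_cancel₀ _ h64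
  have ha4 : a₁ * (64 * κ ^ 2) * (α:ℂ) ^ 2
      = 16 * ((μ:ℂ) - 1) * ((α:ℂ) * κ * ((μ:ℂ) + 1) - (μ:ℂ) * (p:ℂ) * ((μ:ℂ) - 1))
        * ((α:ℂ) * κ - (μ:ℂ) * (p:ℂ)) := by
    rw [ha3]
    linear_combination
      ((1 - (μ:ℂ)) * ((α:ℂ) * ((p:ℂ) * (lam ^ 2 - κ ^ 2) + 4 * I * κ))) * hXα
      + ((1 - (μ:ℂ)) * 4 * I * ((α:ℂ) * κ * ((μ:ℂ) + 1) - (μ:ℂ) * (p:ℂ) * ((μ:ℂ) - 1))) * hYα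
      + (16 * (1 - (μ:ℂ)) * ((α:ℂ) * κ * ((μ:ℂ) + 1) - (μ:ℂ) * (p:ℂ) * ((μ:ℂ) - 1))
          * ((α:ℂ) * κ - (μ:ℂ) * (p:ℂ))) * Complex.I_sq
  have hnκ : n κ = 4*(μ:ℂ)*(p:ℂ)^2*((c*κ^2-(ε:ℂ))^2)*((α:ℂ)*κ-(μ:ℂ)*(p:ℂ))^2
      - 4*(μ:ℂ)*((α:ℂ)*κ-(μ:ℂ)*(p:ℂ))^3*((α:ℂ)*κ+(2-(μ:ℂ))*(p:ℂ))
      - 2*(μ:ℂ)*((α:ℂ)*κ-(μ:ℂ)*(p:ℂ))^2*((4*c*κ*(c*κ^2-(ε:ℂ)))^2)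
      + (μ:ℂ)*((α:ℂ)*κ-(μ:ℂ)*(p:ℂ))^2*((4*c*κ*(c*κ^2-(ε:ℂ)))^2) := by
    simp only [hn]; ring
  have hdκ : d κ = 4*(μ:ℂ)*((α:ℂ)*κ-(μ:ℂ)*(p:ℂ))^2*(-(4 * (α:ℂ)^2 * κ ^ 2 / (μ:ℂ)^2)) := by
    simp only [hd]; rw [hEκ2]
  have hdκ2 : d κ * (μ:ℂ) ^ 2
      = -(16 * (α:ℂ) ^ 2 * κ ^ 2 * ((α:ℂ) * κ - (μ:ℂ) * (p:ℂ)) ^ 2 * (μ:ℂ)) := by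
    rw [hdκ]
    linear_combination (-(16 * (μ:ℂ) * ((α:ℂ) * κ - (μ:ℂ) * (p:ℂ)) ^ 2 * (α:ℂ) ^ 2 * κ ^ 2)) * hμinv
  have hcsq : c ^ 2 * (4 * (μ:ℂ) ^ 2) = (α:ℂ) ^ 2 := by
    linear_combination (2 * (μ:ℂ) * c + (α:ℂ)) * hc2μ
  have hMne : (64 * κ ^ 2 * (α:ℂ) ^ 2 * (μ:ℂ) ^ 2) ≠ 0 :=
    mul_ne_zero (mul_ne_zero (mul_ne_zero (by norm_num) (pow_ne_zero 2 hκ0))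
      (pow_ne_zero 2 hα')) (pow_ne_zero 2 hμ')
  have step : n κ * (64 * κ ^ 2 * (α:ℂ) ^ 2 * (μ:ℂ) ^ 2)
      = (a₁ * d κ) * (64 * κ ^ 2 * (α:ℂ) ^ 2 * (μ:ℂ) ^ 2) := by
    have e1 : (a₁ * d κ) * (64 * κ ^ 2 * (α:ℂ) ^ 2 * (μ:ℂ) ^ 2)
        = (a₁ * (64 * κ ^ 2) * (α:ℂ) ^ 2) * (d κ * (μ:ℂ) ^ 2) := by ring
    rw [e1, ha4, hdκ2, hnκ, h1, h2]
    linear_combination (256 * κ ^ 4 * (α:ℂ) ^ 2 * (μ:ℂ) * ((α:ℂ) * κ - (μ:ℂ) * (p:ℂ)) ^ 2) * hcsq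
  have hval : n κ / d κ = a₁ := by
    rw [div_eq_iff hdκ0]
    exact mul_right_cancel₀ hMne step
  rw [hval] at hcont
  exact Filter.Tendsto.congr' (hWev.mono fun z h => h.symm) hcont
end

section
/- Let α, ε, p be real numbers with α ≠ 0, and set μ = 1. Define f(z) = αz²/2 − ε, A(z) = p·f(z)/(1+f(z)²), B(z) = p − (αz+p)/(1+f(z)²), C(z) = (αz−p)/(1+f(z)²), and r(z) = (C'/C)·A + A² + C·B − A' − (1/2)(C'/C)' + (1/4)(C'/C)². Then for every z ∈ ℂ at which r is defined (i.e. 1+f(z)² ≠ 0 and z ≠ p/α), r(z) = 3/(4(z − p/α)²). -/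
set_option maxHeartbeats 2000000


open Complex

/- Auxiliary derivative lemmas -/

private lemma hd_f (a e z : ℂ) : HasDerivAt (fun w : ℂ => a * w ^ 2 / 2 - e) (a * z) z := by
  have h := (((hasDerivAt_pow 2 z).const_mul a).div_const 2).sub_const e
  refine h.congr_deriv ?_
  norm_num
  ring

private lemma hd_D (a e z : ℂ) :
    HasDerivAt (fun w : ℂ => 1 + (a * w ^ 2 / 2 - e) ^ 2)
      ((2 : ℕ) * (a * z ^ 2 / 2 - e) ^ 1 * (a * z)) z :=
  ((hd_f a e z).pow 2).const_add 1

private lemma hd_N (a p z : ℂ) : HasDerivAt (fun w : ℂ => a * w - p) (a * 1) z :=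
  ((hasDerivAt_id z).const_mul a).sub_const p

/-- Derivative of `C`. -/
private lemma hd_C (a e p z : ℂ) (hD : 1 + (a * z ^ 2 / 2 - e) ^ 2 ≠ 0) :
    HasDerivAt (fun w : ℂ => (a * w - p) / (1 + (a * w ^ 2 / 2 - e) ^ 2))
      ((a * 1 * (1 + (a * z ^ 2 / 2 - e) ^ 2)
        - (a * z - p) * ((2 : ℕ) * (a * z ^ 2 / 2 - e) ^ 1 * (a * z)))
        / (1 + (a * z ^ 2 / 2 - e) ^ 2) ^ 2) z :=
  (hd_N a p z).div (hd_D a e z) hD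

/-- Derivative of `A`. -/
private lemma hd_A (a e p z : ℂ) (hD : 1 + (a * z ^ 2 / 2 - e) ^ 2 ≠ 0) :
    HasDerivAt (fun w : ℂ => p * (a * w ^ 2 / 2 - e) / (1 + (a * w ^ 2 / 2 - e) ^ 2))
      ((p * (a * z) * (1 + (a * z ^ 2 / 2 - e) ^ 2)
        - p * (a * z ^ 2 / 2 - e) * ((2 : ℕ) * (a * z ^ 2 / 2 - e) ^ 1 * (a * z)))
        / (1 + (a * z ^ 2 / 2 - e) ^ 2) ^ 2) z :=
  (((hd_f a e z).const_mul p).div (hd_D a e z) hD)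

private lemma div_sq_div (x D N : ℂ) (hD : D ≠ 0) : x / D ^ 2 / (N / D) = x / (D * N) := by
  rcases eq_or_ne N 0 with h | h
  · simp [h]
  · field_simp

/-- The rational function that `g = C'/C` agrees with where the denominator is nonzero. -/
private noncomputable def Gfun (a e p : ℂ) : ℂ → ℂ := fun w =>
  (a * 1 * (1 + (a * w ^ 2 / 2 - e) ^ 2)
    - (a * w - p) * ((2 : ℕ) * (a * w ^ 2 / 2 - e) ^ 1 * (a * w)))
  / ((1 + (a * w ^ 2 / 2 - e) ^ 2) * (a * w - p))

/-- Derivative of the numerator of `Gfun`. -/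
private lemma hd_P (a e p z : ℂ) :
    HasDerivAt (fun w : ℂ =>
        a * 1 * (1 + (a * w ^ 2 / 2 - e) ^ 2)
          - (a * w - p) * ((2 : ℕ) * (a * w ^ 2 / 2 - e) ^ 1 * (a * w)))
      (a * 1 * ((2 : ℕ) * (a * z ^ 2 / 2 - e) ^ 1 * (a * z))
        - ((a * 1) * ((2 : ℕ) * (a * z ^ 2 / 2 - e) ^ 1 * (a * z))
          + (a * z - p) * (((2 : ℕ) * ((1 : ℕ) * (a * z ^ 2 / 2 - e) ^ 0 * (a * z)))
              * (a * z) + (2 : ℕ) * (a * z ^ 2 / 2 - e) ^ 1 * (a * 1)))) z := by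
  have h1 : HasDerivAt (fun w : ℂ => (2 : ℕ) * (a * w ^ 2 / 2 - e) ^ 1 * (a * w))
      (((2 : ℕ) * ((1 : ℕ) * (a * z ^ 2 / 2 - e) ^ 0 * (a * z))) * (a * z)
        + (2 : ℕ) * (a * z ^ 2 / 2 - e) ^ 1 * (a * 1)) z :=
    ((((hd_f a e z).pow 1).const_mul ((2 : ℕ) : ℂ)).mul
      (((hasDerivAt_id z).const_mul a)))
  exact ((hd_D a e z).const_mul (a * 1)).sub ((hd_N a p z).mul h1)

/-- Derivative of the denominator of `Gfun`. -/
private lemma hd_DN (a e p z : ℂ) :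
    HasDerivAt (fun w : ℂ => (1 + (a * w ^ 2 / 2 - e) ^ 2) * (a * w - p))
      (((2 : ℕ) * (a * z ^ 2 / 2 - e) ^ 1 * (a * z)) * (a * z - p)
        + (1 + (a * z ^ 2 / 2 - e) ^ 2) * (a * 1)) z :=
  (hd_D a e z).mul (hd_N a p z)

private lemma hd_G (a e p z : ℂ) (hD : 1 + (a * z ^ 2 / 2 - e) ^ 2 ≠ 0)
    (hN : a * z - p ≠ 0) :
    HasDerivAt (Gfun a e p)
      (((a * 1 * ((2 : ℕ) * (a * z ^ 2 / 2 - e) ^ 1 * (a * z))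
        - ((a * 1) * ((2 : ℕ) * (a * z ^ 2 / 2 - e) ^ 1 * (a * z))
          + (a * z - p) * (((2 : ℕ) * ((1 : ℕ) * (a * z ^ 2 / 2 - e) ^ 0 * (a * z)))
              * (a * z) + (2 : ℕ) * (a * z ^ 2 / 2 - e) ^ 1 * (a * 1))))
        * ((1 + (a * z ^ 2 / 2 - e) ^ 2) * (a * z - p))
        - (a * 1 * (1 + (a * z ^ 2 / 2 - e) ^ 2)
          - (a * z - p) * ((2 : ℕ) * (a * z ^ 2 / 2 - e) ^ 1 * (a * z)))
          * (((2 : ℕ) * (a * z ^ 2 / 2 - e) ^ 1 * (a * z)) * (a * z - p)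
            + (1 + (a * z ^ 2 / 2 - e) ^ 2) * (a * 1)))
        / ((1 + (a * z ^ 2 / 2 - e) ^ 2) * (a * z - p)) ^ 2) z :=
  (hd_P a e p z).div (hd_DN a e p z) (mul_ne_zero hD hN)

private lemma combine6 (P A0 W pc Q R D N u : ℂ) (hD : D ≠ 0) (hN : N ≠ 0) (hu : u ≠ 0)
    (h : (4 * N * P * A0 + 4 * N ^ 2 * A0 ^ 2 + 4 * N ^ 2 * (N * (pc * D - W))
        - 4 * N ^ 2 * Q - 2 * R + P ^ 2) * u ^ 2 = 3 * D ^ 2 * N ^ 2) :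
    P / (D * N) * (A0 / D) + (A0 / D) ^ 2 + N / D * (pc - W / D) - Q / D ^ 2
      - 1 / 2 * (R / (D * N) ^ 2) + 1 / 4 * (P / (D * N)) ^ 2 = 3 / (4 * u ^ 2) := by
  have hDN : D * N ≠ 0 := mul_ne_zero hD hN
  have hD2 : D ^ 2 ≠ 0 := pow_ne_zero 2 hD
  have hDND : D * N * D ≠ 0 := mul_ne_zero hDN hD
  have hDN2 : (D * N) ^ 2 ≠ 0 := pow_ne_zero 2 hDN
  rw [div_mul_div_comm, div_pow, div_pow, sub_div' hD, div_mul_div_comm,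
    mul_comm (1/2) _, mul_one_div, mul_comm (1/4) _, mul_one_div, div_div, div_div,
    div_add_div _ _ hDND hD2, div_add_div _ _ (mul_ne_zero hDND hD2) (mul_ne_zero hD hD),
    div_sub_div _ _ (mul_ne_zero (mul_ne_zero hDND hD2) (mul_ne_zero hD hD)) hD2,
    div_sub_div _ _ (mul_ne_zero (mul_ne_zero (mul_ne_zero hDND hD2) (mul_ne_zero hD hD)) hD2)
      (mul_ne_zero hDN2 two_ne_zero),
    div_add_div _ _ (mul_ne_zero (mul_ne_zero (mul_ne_zero (mul_ne_zero hDND hD2) (mul_ne_zero hD hD)) hD2) (mul_ne_zero hDN2 two_ne_zero))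
      (mul_ne_zero hDN2 (by norm_num : (4:ℂ) ≠ 0)),
    div_eq_div_iff (by
      apply mul_ne_zero (mul_ne_zero (mul_ne_zero (mul_ne_zero (mul_ne_zero hDND hD2) (mul_ne_zero hD hD)) hD2) (mul_ne_zero hDN2 two_ne_zero))
      exact mul_ne_zero hDN2 (by norm_num : (4:ℂ) ≠ 0))
      (mul_ne_zero (by norm_num : (4:ℂ) ≠ 0) (pow_ne_zero 2 hu))]
  linear_combination (8 * D ^ 10 * N ^ 3) * h

/-- For `μ = 1` the potential `r(z)` of the second-order equation obtained from
the normal variational equations (sphere, Newton potential) collapses to a single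
double pole: `r(z) = 3/(4(z − p/α)²)`. -/
theorem stmt_12 (α ε p : ℝ) (hα : α ≠ 0)
    (f A B C g r : ℂ → ℂ)
    (hf : ∀ z, f z = (α : ℂ) * z ^ 2 / 2 - (ε : ℂ))
    (hA : ∀ z, A z = (p : ℂ) * f z / (1 + (f z) ^ 2))
    (hB : ∀ z, B z = (p : ℂ) - ((α : ℂ) * z + (p : ℂ)) / (1 + (f z) ^ 2))
    (hC : ∀ z, C z = ((α : ℂ) * z - (p : ℂ)) / (1 + (f z) ^ 2))
    (hg : ∀ z, g z = deriv C z / C z)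
    (hr : ∀ z, r z = g z * A z + (A z) ^ 2 + C z * B z - deriv A z
      - (1/2) * deriv g z + (1/4) * (g z) ^ 2) :
    ∀ z : ℂ, 1 + (f z) ^ 2 ≠ 0 → z ≠ (p : ℂ) / (α : ℂ) →
      r z = 3 / (4 * (z - (p : ℂ) / (α : ℂ)) ^ 2) := by
  intro z hD0 hz0
  set a : ℂ := (α : ℂ) with ha_def
  set e : ℂ := (ε : ℂ) with he_def
  set pc : ℂ := (p : ℂ) with hp_def
  have ha : a ≠ 0 := by
    simpa [ha_def] using Complex.ofReal_ne_zero.mpr hα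
  -- function-level identities
  have hCfun : C = fun w => (a * w - pc) / (1 + (a * w ^ 2 / 2 - e) ^ 2) := by
    funext w; rw [hC w, hf w]
  have hAfun : A = fun w => pc * (a * w ^ 2 / 2 - e) / (1 + (a * w ^ 2 / 2 - e) ^ 2) := by
    funext w; rw [hA w, hf w]
  have hD : 1 + (a * z ^ 2 / 2 - e) ^ 2 ≠ 0 := by rw [← hf z]; exact hD0
  have hzsub : z - pc / a ≠ 0 := sub_ne_zero.mpr hz0
  have hN : a * z - pc ≠ 0 := by
    intro h
    apply hzsub
    field_simp
    linear_combination h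
  -- g agrees with Gfun near z
  have hgG : ∀ w : ℂ, 1 + (a * w ^ 2 / 2 - e) ^ 2 ≠ 0 → g w = Gfun a e pc w := by
    intro w hw
    rw [hg w, hCfun]
    rw [(hd_C a e pc w hw).deriv]
    show _ = Gfun a e pc w
    unfold Gfun
    beta_reduce
    exact div_sq_div _ _ _ hw
  have hEvD : ∀ᶠ w in nhds z, 1 + (a * w ^ 2 / 2 - e) ^ 2 ≠ 0 := by
    have hc : ContinuousAt (fun w : ℂ => 1 + (a * w ^ 2 / 2 - e) ^ 2) z := by
      fun_prop
    exact hc.eventually_ne hD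
  have hEv : g =ᶠ[nhds z] Gfun a e pc := by
    filter_upwards [hEvD] with w hw using hgG w hw
  have hderivg : deriv g z = deriv (Gfun a e pc) z := hEv.deriv_eq
  rw [hr z, hA z, hB z, hC z, hf z, hgG z hD, hderivg,
    (hd_G a e pc z hD hN).deriv, hAfun, (hd_A a e pc z hD).deriv]
  unfold Gfun
  push_cast
  set F := a * z ^ 2 / 2 - e with hFset
  set D := 1 + F ^ 2 with hDset
  set N := a * z - pc with hNset
  clear_value a e pc F D N
  exact combine6 _ _ _ _ _ _ _ _ _ hD hN hzsub (by rw [hNset, hDset]; field_simp; ring)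
end

section
/- Let z₀, λ ∈ ℂ, let U ⊆ ℂ be open, and let q, h : U → ℂ be holomorphic nowhere-vanishing functions with q(z)⁴ = z² − λ² and h(z)² = z − z₀ for all z ∈ U. Define r(z) = (3/4)·((z₀² − 2λ²)z² + 2λ²z₀z + λ²(λ² − 2z₀²))/((z − z₀)²(z² − λ²)²). Then the functions y₁ = q³/h and y₂ = q·(z₀z − λ²)/h satisfy y₁'' = r·y₁ and y₂'' = r·y₂ on U. -/
open Filter

set_option maxHeartbeats 1600000

private lemma second_deriv_eq {U : Set ℂ} (hU : IsOpen U) {y g w : ℂ → ℂ}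
    (h1 : ∀ z ∈ U, HasDerivAt y (g z) z)
    (h2 : ∀ z ∈ U, HasDerivAt g (w z) z) :
    ∀ z ∈ U, deriv (deriv y) z = w z := by
  intro z hz
  have heq : deriv y =ᶠ[nhds z] g := by
    filter_upwards [hU.mem_nhds hz] with x hx using (h1 x hx).deriv
  rw [heq.deriv_eq, (h2 z hz).deriv]

/-- Explicit Liouvillian solutions of `y'' = r·y` for the oscillator potential in
the degenerate case `μ = 1`. Here `q` and `h` are holomorphic branches of
`(z² − λ²)^{1/4}` and `(z − z₀)^{1/2}` on the open set `U`. -/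
theorem stmt_13 (z₀ lam : ℂ) (U : Set ℂ) (hU : IsOpen U) (q h : ℂ → ℂ)
    (hq : DifferentiableOn ℂ q U) (hh : DifferentiableOn ℂ h U)
    (hq0 : ∀ z ∈ U, q z ≠ 0) (hh0 : ∀ z ∈ U, h z ≠ 0)
    (hq4 : ∀ z ∈ U, (q z) ^ 4 = z ^ 2 - lam ^ 2)
    (hh2 : ∀ z ∈ U, (h z) ^ 2 = z - z₀)
    (r y₁ y₂ : ℂ → ℂ)
    (hr : ∀ z, r z = (3/4) * ((z₀ ^ 2 - 2 * lam ^ 2) * z ^ 2 + 2 * lam ^ 2 * z₀ * z +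
      lam ^ 2 * (lam ^ 2 - 2 * z₀ ^ 2)) / ((z - z₀) ^ 2 * (z ^ 2 - lam ^ 2) ^ 2))
    (hy₁ : ∀ z, y₁ z = (q z) ^ 3 / h z)
    (hy₂ : ∀ z, y₂ z = q z * (z₀ * z - lam ^ 2) / h z) :
    (∀ z ∈ U, deriv (deriv y₁) z = r z * y₁ z) ∧
    (∀ z ∈ U, deriv (deriv y₂) z = r z * y₂ z) := by
  -- derivative of q on U
  have hq' : ∀ z ∈ U, HasDerivAt q (z / (2 * (q z) ^ 3)) z := by
    intro z hz
    have hd : DifferentiableAt ℂ q z := hq.differentiableAt (hU.mem_nhds hz)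
    have h4 := hd.hasDerivAt.pow 4
    have h4' : HasDerivAt (fun w : ℂ => w ^ 2 - lam ^ 2) (2 * z) z := by
      simpa using (hasDerivAt_pow 2 z).sub_const (lam ^ 2)
    have heq : (fun w => q w ^ 4) =ᶠ[nhds z] (fun w : ℂ => w ^ 2 - lam ^ 2) := by
      filter_upwards [hU.mem_nhds hz] with x hx using hq4 x hx
    have huniq := h4.unique (h4'.congr_of_eventuallyEq heq)
    have h3 : (q z) ^ 3 ≠ 0 := pow_ne_zero _ (hq0 z hz)
    have hval : deriv q z = z / (2 * (q z) ^ 3) := by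
      rw [eq_div_iff (mul_ne_zero two_ne_zero h3)]
      norm_num at huniq
      linear_combination huniq / 2
    exact hval ▸ hd.hasDerivAt
  -- derivative of h on U
  have hh' : ∀ z ∈ U, HasDerivAt h (1 / (2 * h z)) z := by
    intro z hz
    have hd : DifferentiableAt ℂ h z := hh.differentiableAt (hU.mem_nhds hz)
    have h2 := hd.hasDerivAt.pow 2
    have h2' : HasDerivAt (fun w : ℂ => w - z₀) 1 z := (hasDerivAt_id' z).sub_const z₀
    have heq : (fun w => h w ^ 2) =ᶠ[nhds z] (fun w : ℂ => w - z₀) := by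
      filter_upwards [hU.mem_nhds hz] with x hx using hh2 x hx
    have huniq := h2.unique (h2'.congr_of_eventuallyEq heq)
    have hb : h z ≠ 0 := hh0 z hz
    have hval : deriv h z = 1 / (2 * h z) := by
      field_simp at huniq ⊢
      linear_combination huniq
    exact hval ▸ hd.hasDerivAt
  -- pure form of r on U
  have hr' : ∀ z ∈ U, r z = 3 / 4 *
      (2 * (q z) ^ 4 * ((h z) ^ 2) ^ 2 - z ^ 2 * ((h z) ^ 2) ^ 2
        - 2 * z * (q z) ^ 4 * (h z) ^ 2 + ((q z) ^ 4) ^ 2) /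
      (((h z) ^ 2) ^ 2 * ((q z) ^ 4) ^ 2) := by
    intro z hz
    rw [hr z, hq4 z hz, hh2 z hz]
    congr 1
    ring
  -- pure form of y₂ on U
  have hy₂' : ∀ z ∈ U, y₂ z = q z * ((q z) ^ 4 - z * (h z) ^ 2) / h z := by
    intro z hz
    rw [hy₂ z, hq4 z hz, hh2 z hz]
    congr 1
    ring
  constructor
  · -- y₁
    apply second_deriv_eq hU
      (g := fun w => 3 * w / (2 * (q w * h w)) - (q w) ^ 3 / (2 * (h w) ^ 3))
    · intro z hz
      have Hq := hq' z hz
      have Hh := hh' z hz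
      have ha := hq0 z hz
      have hb := hh0 z hz
      have key := (Hq.pow 3).div Hh hb
      have hyfun : y₁ = fun w => q w ^ 3 / h w := funext hy₁
      rw [hyfun]
      refine key.congr_deriv (Eq.symm ?_)
      simp only [Pi.pow_apply, Pi.mul_apply, Pi.sub_apply]
      field_simp [ha, hb]
      ring
    · intro z hz
      have Hq := hq' z hz
      have Hh := hh' z hz
      have ha := hq0 z hz
      have hb := hh0 z hz
      have d1 : HasDerivAt (fun w : ℂ => 3 * w) 3 z := by
        simpa using (hasDerivAt_id' z).const_mul (3 : ℂ)
      have d2 := (Hq.mul Hh).const_mul (2 : ℂ)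
      have t1 := d1.div d2 (mul_ne_zero two_ne_zero (mul_ne_zero ha hb))
      have t2 := (Hq.pow 3).div ((Hh.pow 3).const_mul (2 : ℂ))
        (mul_ne_zero two_ne_zero (pow_ne_zero _ hb))
      have H := t1.sub t2
      refine H.congr_deriv (Eq.symm ?_)
      simp only [Pi.pow_apply, Pi.mul_apply, Pi.sub_apply]
      rw [hr' z hz, hy₁ z,
        div_sub_div _ _ (pow_ne_zero 2 (mul_ne_zero two_ne_zero (mul_ne_zero ha hb)))
          (pow_ne_zero 2 (mul_ne_zero two_ne_zero (pow_ne_zero 3 hb))),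
        mul_comm, ← mul_div_assoc, mul_div_assoc',
        div_eq_div_iff (by simp [ha, hb]) (by simp [ha, hb])]
      field_simp [ha, hb]
      ring
  · -- y₂
    apply second_deriv_eq hU
      (g := fun w => w * ((q w) ^ 4 - w * (h w) ^ 2) / (2 * ((q w) ^ 3 * h w))
        + q w * (w - (h w) ^ 2) / h w
        - q w * ((q w) ^ 4 - w * (h w) ^ 2) / (2 * (h w) ^ 3))
    · intro z hz
      have Hq := hq' z hz
      have Hh := hh' z hz
      have ha := hq0 z hz
      have hb := hh0 z hz
      have dinner := (Hq.pow 4).sub ((hasDerivAt_id' z).mul (Hh.pow 2))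
      have H := (Hq.mul dinner).div Hh hb
      have heq : y₂ =ᶠ[nhds z] (fun w => q w * ((q w) ^ 4 - w * (h w) ^ 2) / h w) := by
        filter_upwards [hU.mem_nhds hz] with x hx using hy₂' x hx
      have H2 := H.congr_of_eventuallyEq heq
      refine H2.congr_deriv (Eq.symm ?_)
      simp only [Pi.pow_apply, Pi.mul_apply, Pi.sub_apply]
      rw [eq_div_iff (pow_ne_zero 2 hb)]
      field_simp [ha, hb]
      have c1 : q z * (q z)⁻¹ = 1 := mul_inv_cancel₀ ha
      have c2 : h z * (h z)⁻¹ = 1 := mul_inv_cancel₀ hb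
      ring
    · intro z hz
      have Hq := hq' z hz
      have Hh := hh' z hz
      have ha := hq0 z hz
      have hb := hh0 z hz
      have dinner := (Hq.pow 4).sub ((hasDerivAt_id' z).mul (Hh.pow 2))
      have t1 := ((hasDerivAt_id' z).mul dinner).div
        (((Hq.pow 3).mul Hh).const_mul (2 : ℂ))
        (mul_ne_zero two_ne_zero (mul_ne_zero (pow_ne_zero _ ha) hb))
      have t2 := (Hq.mul ((hasDerivAt_id' z).sub (Hh.pow 2))).div Hh hb
      have t3 := (Hq.mul dinner).div ((Hh.pow 3).const_mul (2 : ℂ))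
        (mul_ne_zero two_ne_zero (pow_ne_zero _ hb))
      have H := (t1.add t2).sub t3
      refine H.congr_deriv (Eq.symm ?_)
      simp only [Pi.pow_apply, Pi.mul_apply, Pi.sub_apply]
      rw [hr' z hz, hy₂' z hz,
        div_add_div _ _
          (pow_ne_zero 2 (mul_ne_zero two_ne_zero (mul_ne_zero (pow_ne_zero 3 ha) hb)))
          (pow_ne_zero 2 hb),
        div_sub_div _ _
          (mul_ne_zero (pow_ne_zero 2 (mul_ne_zero two_ne_zero (mul_ne_zero (pow_ne_zero 3 ha) hb))) (pow_ne_zero 2 hb))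
          (pow_ne_zero 2 (mul_ne_zero two_ne_zero (pow_ne_zero 3 hb))),
        mul_comm, ← mul_div_assoc, mul_div_assoc',
        div_eq_div_iff (by simp [ha, hb]) (by simp [ha, hb])]
      field_simp [ha, hb]
      have c1 : q z * (q z)⁻¹ = 1 := mul_inv_cancel₀ ha
      have c2 : h z * (h z)⁻¹ = 1 := mul_inv_cancel₀ hb
      ring
end

section
/- Let m, m₁, R be nonzero real numbers. On ℝ⁵ with coordinates (θ, p_θ, p₀, p₁, p₂), define h₁ = (1/(2mR²))·(p_θ² + p₂²/sin²θ) and h₂ = (p_θ p₀)/(m₁R²) − p₂²/(m₁R²) + (p₁p₂/(m₁R²))·cot θ. Then the Poisson bracket {h₁, h₂} vanishes at every point with sin θ ≠ 0. -/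
/-- The two summands `h₁`, `h₂` of the reduced Hamiltonian of the two-body problem
on the sphere `S²` Poisson-commute (the bracket combines the canonical pair
`(θ, p_θ)` with the Lie–Poisson structure of `so(3)*`). -/
theorem stmt_14 (m m₁ R : ℝ) (hm : m ≠ 0) (hm₁ : m₁ ≠ 0) (hR : R ≠ 0)
    (h₁ h₂ : ℝ → ℝ → ℝ → ℝ → ℝ → ℝ)
    (hh₁ : ∀ θ pθ p₀ p₁ p₂ : ℝ, h₁ θ pθ p₀ p₁ p₂ =
      (1 / (2 * m * R ^ 2)) * (pθ ^ 2 + p₂ ^ 2 / (Real.sin θ) ^ 2))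
    (hh₂ : ∀ θ pθ p₀ p₁ p₂ : ℝ, h₂ θ pθ p₀ p₁ p₂ =
      (pθ * p₀) / (m₁ * R ^ 2) - p₂ ^ 2 / (m₁ * R ^ 2) +
        (p₁ * p₂ / (m₁ * R ^ 2)) * (Real.cos θ / Real.sin θ))
    (θ pθ p₀ p₁ p₂ : ℝ) (hθ : Real.sin θ ≠ 0) :
    (deriv (fun t => h₁ t pθ p₀ p₁ p₂) θ) * (deriv (fun t => h₂ θ t p₀ p₁ p₂) pθ)
    - (deriv (fun t => h₁ θ t p₀ p₁ p₂) pθ) * (deriv (fun t => h₂ t pθ p₀ p₁ p₂) θ)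
    - p₂ * ((deriv (fun t => h₁ θ pθ t p₁ p₂) p₀) * (deriv (fun t => h₂ θ pθ p₀ t p₂) p₁)
        - (deriv (fun t => h₁ θ pθ p₀ t p₂) p₁) * (deriv (fun t => h₂ θ pθ t p₁ p₂) p₀))
    - p₀ * ((deriv (fun t => h₁ θ pθ p₀ t p₂) p₁) * (deriv (fun t => h₂ θ pθ p₀ p₁ t) p₂)
        - (deriv (fun t => h₁ θ pθ p₀ p₁ t) p₂) * (deriv (fun t => h₂ θ pθ p₀ t p₂) p₁))
    - p₁ * ((deriv (fun t => h₁ θ pθ p₀ p₁ t) p₂) * (deriv (fun t => h₂ θ pθ t p₁ p₂) p₀)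
        - (deriv (fun t => h₁ θ pθ t p₁ p₂) p₀) * (deriv (fun t => h₂ θ pθ p₀ p₁ t) p₂))
    = 0 := by
  have hsin2 : Real.sin θ ^ 2 ≠ 0 := pow_ne_zero _ hθ
  set c : ℝ := 1 / (2 * m * R ^ 2) with hc
  set d : ℝ := m₁ * R ^ 2 with hd
  have Hs : HasDerivAt Real.sin (Real.cos θ) θ := Real.hasDerivAt_sin θ
  have Hc : HasDerivAt Real.cos (-Real.sin θ) θ := Real.hasDerivAt_cos θ
  have Hs2 : HasDerivAt (fun t => Real.sin t ^ 2) (2 * Real.sin θ * Real.cos θ) θ := by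
    simpa [mul_comm] using Hs.fun_pow 2
  -- derivatives of h₁
  have D1θ : deriv (fun t => h₁ t pθ p₀ p₁ p₂) θ
      = c * (p₂ ^ 2 * (-(2 * Real.sin θ * Real.cos θ) / (Real.sin θ ^ 2) ^ 2)) := by
    have e : (fun t => h₁ t pθ p₀ p₁ p₂)
        = fun t => c * (pθ ^ 2 + p₂ ^ 2 * (Real.sin t ^ 2)⁻¹) := by
      funext t; rw [hh₁]; ring
    rw [e]
    exact ((((Hs2.inv hsin2).const_mul (p₂ ^ 2)).const_add (pθ ^ 2)).const_mul c).deriv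
  have D1pθ : deriv (fun t => h₁ θ t p₀ p₁ p₂) pθ = c * (2 * pθ) := by
    have e : (fun t => h₁ θ t p₀ p₁ p₂)
        = fun t => c * (t ^ 2 + p₂ ^ 2 / Real.sin θ ^ 2) := by
      funext t; rw [hh₁]
    rw [e]
    have := (((hasDerivAt_pow 2 pθ).add_const (p₂ ^ 2 / Real.sin θ ^ 2)).const_mul c).deriv
    simpa using this
  have D1p₀ : deriv (fun t => h₁ θ pθ t p₁ p₂) p₀ = 0 := by
    have e : (fun t => h₁ θ pθ t p₁ p₂)
        = fun _ => c * (pθ ^ 2 + p₂ ^ 2 / Real.sin θ ^ 2) := by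
      funext t; rw [hh₁]
    rw [e, deriv_const]
  have D1p₁ : deriv (fun t => h₁ θ pθ p₀ t p₂) p₁ = 0 := by
    have e : (fun t => h₁ θ pθ p₀ t p₂)
        = fun _ => c * (pθ ^ 2 + p₂ ^ 2 / Real.sin θ ^ 2) := by
      funext t; rw [hh₁]
    rw [e, deriv_const]
  have D1p₂ : deriv (fun t => h₁ θ pθ p₀ p₁ t) p₂ = c * (2 * p₂ * (Real.sin θ ^ 2)⁻¹) := by
    have e : (fun t => h₁ θ pθ p₀ p₁ t)
        = fun t => c * (pθ ^ 2 + t ^ 2 * (Real.sin θ ^ 2)⁻¹) := by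
      funext t; rw [hh₁]; ring
    rw [e]
    have := ((((hasDerivAt_pow 2 p₂).mul_const ((Real.sin θ ^ 2)⁻¹)).const_add
      (pθ ^ 2)).const_mul c).deriv
    simpa [mul_assoc] using this
  -- derivatives of h₂
  have D2θ : deriv (fun t => h₂ t pθ p₀ p₁ p₂) θ
      = (p₁ * p₂ / d) * ((-Real.sin θ * Real.sin θ - Real.cos θ * Real.cos θ)
          / Real.sin θ ^ 2) := by
    have e : (fun t => h₂ t pθ p₀ p₁ p₂)
        = fun t => (pθ * p₀ / d - p₂ ^ 2 / d) + (p₁ * p₂ / d) * (Real.cos t / Real.sin t) := by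
      funext t; rw [hh₂]
    rw [e]
    exact (((Hc.div Hs hθ).const_mul (p₁ * p₂ / d)).const_add (pθ * p₀ / d - p₂ ^ 2 / d)).deriv
  have D2pθ : deriv (fun t => h₂ θ t p₀ p₁ p₂) pθ = p₀ / d := by
    have e : (fun t => h₂ θ t p₀ p₁ p₂)
        = fun t => (p₀ / d) * t + (-(p₂ ^ 2 / d) + (p₁ * p₂ / d) * (Real.cos θ / Real.sin θ)) := by
      funext t; rw [hh₂]; ring
    rw [e]
    have := (((hasDerivAt_id pθ).const_mul (p₀ / d)).add_const
      (-(p₂ ^ 2 / d) + (p₁ * p₂ / d) * (Real.cos θ / Real.sin θ))).deriv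
    simpa using this
  have D2p₀ : deriv (fun t => h₂ θ pθ t p₁ p₂) p₀ = pθ / d := by
    have e : (fun t => h₂ θ pθ t p₁ p₂)
        = fun t => (pθ / d) * t + (-(p₂ ^ 2 / d) + (p₁ * p₂ / d) * (Real.cos θ / Real.sin θ)) := by
      funext t; rw [hh₂]; ring
    rw [e]
    have := (((hasDerivAt_id p₀).const_mul (pθ / d)).add_const
      (-(p₂ ^ 2 / d) + (p₁ * p₂ / d) * (Real.cos θ / Real.sin θ))).deriv
    simpa using this
  have D2p₁ : deriv (fun t => h₂ θ pθ p₀ t p₂) p₁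
      = (p₂ / d) * (Real.cos θ / Real.sin θ) := by
    have e : (fun t => h₂ θ pθ p₀ t p₂)
        = fun t => ((p₂ / d) * (Real.cos θ / Real.sin θ)) * t
            + (pθ * p₀ / d - p₂ ^ 2 / d) := by
      funext t; rw [hh₂]; ring
    rw [e]
    have := (((hasDerivAt_id p₁).const_mul ((p₂ / d) * (Real.cos θ / Real.sin θ))).add_const
      (pθ * p₀ / d - p₂ ^ 2 / d)).deriv
    simpa using this
  have D2p₂ : deriv (fun t => h₂ θ pθ p₀ p₁ t) p₂
      = -(1 / d) * (2 * p₂) + (p₁ / d) * (Real.cos θ / Real.sin θ) := by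
    have e : (fun t => h₂ θ pθ p₀ p₁ t)
        = fun t => ((-(1 / d)) * t ^ 2 + ((p₁ / d) * (Real.cos θ / Real.sin θ)) * t)
            + pθ * p₀ / d := by
      funext t; rw [hh₂]; ring
    rw [e]
    have := ((((hasDerivAt_pow 2 p₂).const_mul (-(1 / d))).add
      ((hasDerivAt_id p₂).const_mul ((p₁ / d) * (Real.cos θ / Real.sin θ)))).add_const
      (pθ * p₀ / d)).deriv
    simpa [mul_comm, mul_assoc] using this
  rw [D1θ, D1pθ, D1p₀, D1p₁, D1p₂, D2θ, D2pθ, D2p₀, D2p₁, D2p₂]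
  have hd' : d ≠ 0 := by
    rw [hd]; exact mul_ne_zero hm₁ (pow_ne_zero _ hR)
  field_simp
  linear_combination (p₂ * m⁻¹ * R⁻¹ ^ 2 * Real.sin θ * pθ * p₁) *
    (Real.sin_sq_add_cos_sq θ)
end

section
/- On ℝ⁵ with coordinates (θ, p_θ, p₀, p₁, p₂), the Poisson bracket {p₁·sin θ + p₂·cos θ, p_θ + p₀} vanishes identically. -/
/-- The Poisson bracket `{p₁·sin θ + p₂·cos θ, p_θ + p₀}` vanishes identically
(the bracket combines the canonical pair `(θ, p_θ)` with the Lie–Poisson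
structure of `so(3)*`). -/
theorem stmt_15 (f g : ℝ → ℝ → ℝ → ℝ → ℝ → ℝ)
    (hf : ∀ θ pθ p₀ p₁ p₂ : ℝ, f θ pθ p₀ p₁ p₂ = p₁ * Real.sin θ + p₂ * Real.cos θ)
    (hg : ∀ θ pθ p₀ p₁ p₂ : ℝ, g θ pθ p₀ p₁ p₂ = pθ + p₀) :
    ∀ θ pθ p₀ p₁ p₂ : ℝ,
    (deriv (fun t => f t pθ p₀ p₁ p₂) θ) * (deriv (fun t => g θ t p₀ p₁ p₂) pθ)
    - (deriv (fun t => f θ t p₀ p₁ p₂) pθ) * (deriv (fun t => g t pθ p₀ p₁ p₂) θ)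
    - p₂ * ((deriv (fun t => f θ pθ t p₁ p₂) p₀) * (deriv (fun t => g θ pθ p₀ t p₂) p₁)
        - (deriv (fun t => f θ pθ p₀ t p₂) p₁) * (deriv (fun t => g θ pθ t p₁ p₂) p₀))
    - p₀ * ((deriv (fun t => f θ pθ p₀ t p₂) p₁) * (deriv (fun t => g θ pθ p₀ p₁ t) p₂)
        - (deriv (fun t => f θ pθ p₀ p₁ t) p₂) * (deriv (fun t => g θ pθ p₀ t p₂) p₁))
    - p₁ * ((deriv (fun t => f θ pθ p₀ p₁ t) p₂) * (deriv (fun t => g θ pθ t p₁ p₂) p₀)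
        - (deriv (fun t => f θ pθ t p₁ p₂) p₀) * (deriv (fun t => g θ pθ p₀ p₁ t) p₂))
    = 0 := by
  intro θ pθ p₀ p₁ p₂
  simp only [hf, hg]
  have h1 : deriv (fun t => p₁ * Real.sin t + p₂ * Real.cos t) θ
      = p₁ * Real.cos θ - p₂ * Real.sin θ := by
    rw [deriv_fun_add (by fun_prop) (by fun_prop), deriv_const_mul _ (by fun_prop),
      deriv_const_mul _ (by fun_prop), Real.deriv_sin, Real.deriv_cos]
    ring
  have h2 : ∀ a b : ℝ, deriv (fun t : ℝ => t * a + b) = fun _ => a := by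
    intro a b; funext x
    rw [deriv_fun_add (by fun_prop) (by fun_prop), deriv_mul_const (by fun_prop)]
    simp
  have h3 : ∀ a b : ℝ, deriv (fun t : ℝ => a + t * b) = fun _ => b := by
    intro a b; funext x
    rw [deriv_fun_add (by fun_prop) (by fun_prop), deriv_mul_const (by fun_prop)]
    simp
  have h4 : ∀ a : ℝ, deriv (fun t : ℝ => t + a) = fun _ => 1 := by
    intro a; funext x
    rw [deriv_fun_add (by fun_prop) (by fun_prop)]; simp
  have h5 : ∀ a : ℝ, deriv (fun t : ℝ => a + t) = fun _ => 1 := by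
    intro a; funext x
    rw [deriv_fun_add (by fun_prop) (by fun_prop)]; simp
  simp only [h1, h2, h3, h4, h5, deriv_const]
  ring
end

section
/- On ℝ⁴ with coordinates (θ, ψ, p_θ, p_ψ), define F = p_θ² + p_ψ²/sin²θ and G = p_θ·cos ψ − p_ψ·sin ψ·cot θ. Then the canonical Poisson bracket {F, G} = ∂F/∂θ·∂G/∂p_θ − ∂F/∂p_θ·∂G/∂θ + ∂F/∂ψ·∂G/∂p_ψ − ∂F/∂p_ψ·∂G/∂ψ vanishes at every point with sin θ ≠ 0. -/
/-- The two summands of the Hamiltonian of the restricted two-body problem on the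
sphere `S²` Poisson-commute for the canonical bracket in `(θ, ψ, p_θ, p_ψ)`. -/
theorem stmt_17 (F G : ℝ → ℝ → ℝ → ℝ → ℝ)
    (hF : ∀ θ ψ pθ pψ : ℝ, F θ ψ pθ pψ = pθ ^ 2 + pψ ^ 2 / (Real.sin θ) ^ 2)
    (hG : ∀ θ ψ pθ pψ : ℝ, G θ ψ pθ pψ =
      pθ * Real.cos ψ - pψ * Real.sin ψ * (Real.cos θ / Real.sin θ)) :
    ∀ θ ψ pθ pψ : ℝ, Real.sin θ ≠ 0 →
    (deriv (fun t => F t ψ pθ pψ) θ) * (deriv (fun t => G θ ψ t pψ) pθ)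
    - (deriv (fun t => F θ ψ t pψ) pθ) * (deriv (fun t => G t ψ pθ pψ) θ)
    + (deriv (fun t => F θ t pθ pψ) ψ) * (deriv (fun t => G θ ψ pθ t) pψ)
    - (deriv (fun t => F θ ψ pθ t) pψ) * (deriv (fun t => G θ t pθ pψ) ψ)
    = 0 := by
  intro θ ψ pθ pψ hs
  have hs2 : (Real.sin θ) ^ 2 ≠ 0 := pow_ne_zero _ hs
  -- ∂F/∂θ
  have h1 : deriv (fun t => F t ψ pθ pψ) θ =
      (0 * Real.sin θ ^ 2 - pψ ^ 2 * (2 * Real.sin θ ^ (2 - 1) * Real.cos θ)) /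
        (Real.sin θ ^ 2) ^ 2 := by
    simp only [hF]
    exact (((hasDerivAt_const θ (pψ ^ 2)).div
      ((Real.hasDerivAt_sin θ).pow 2) hs2).const_add (pθ ^ 2)).deriv
  -- ∂G/∂pθ
  have h2 : deriv (fun t => G θ ψ t pψ) pθ = Real.cos ψ := by
    simp only [hG]
    have : HasDerivAt (fun t : ℝ => t * Real.cos ψ - pψ * Real.sin ψ *
        (Real.cos θ / Real.sin θ)) (1 * Real.cos ψ) pθ :=
      ((hasDerivAt_id pθ).mul_const _).sub_const _
    simpa using this.deriv
  -- ∂F/∂pθ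
  have h3 : deriv (fun t => F θ ψ t pψ) pθ = 2 * pθ := by
    simp only [hF]
    have : HasDerivAt (fun t : ℝ => t ^ 2 + pψ ^ 2 / Real.sin θ ^ 2)
        (2 * pθ ^ (2 - 1)) pθ := (hasDerivAt_pow 2 pθ).add_const _
    simpa using this.deriv
  -- ∂G/∂θ
  have h4 : deriv (fun t => G t ψ pθ pψ) θ =
      pθ * Real.cos ψ - pψ * Real.sin ψ *
        ((-Real.sin θ * Real.sin θ - Real.cos θ * Real.cos θ) / Real.sin θ ^ 2) -
        pθ * Real.cos ψ := by
    simp only [hG]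
    have h := (((Real.hasDerivAt_cos θ).div (Real.hasDerivAt_sin θ) hs).const_mul
      (pψ * Real.sin ψ)).const_sub (pθ * Real.cos ψ)
    have := h.deriv
    simp only [Pi.div_apply] at this
    rw [this]; ring
  -- ∂F/∂ψ
  have h5 : deriv (fun t => F θ t pθ pψ) ψ = 0 := by
    simp only [hF]; exact deriv_const _ _
  -- ∂G/∂pψ
  have h6 : deriv (fun t => G θ ψ pθ t) pψ =
      -(Real.sin ψ * (Real.cos θ / Real.sin θ)) := by
    simp only [hG]
    have : HasDerivAt (fun t : ℝ => pθ * Real.cos ψ - t * Real.sin ψ *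
        (Real.cos θ / Real.sin θ)) (-(1 * (Real.sin ψ * (Real.cos θ / Real.sin θ)))) pψ := by
      have := (((hasDerivAt_id pψ).mul_const (Real.sin ψ)).mul_const
        (Real.cos θ / Real.sin θ)).const_sub (pθ * Real.cos ψ)
      simpa [mul_assoc] using this
    simpa using this.deriv
  -- ∂F/∂pψ
  have h7 : deriv (fun t => F θ ψ pθ t) pψ = 2 * pψ / Real.sin θ ^ 2 := by
    simp only [hF]
    have : HasDerivAt (fun t : ℝ => pθ ^ 2 + t ^ 2 / Real.sin θ ^ 2)
        (2 * pψ ^ (2 - 1) / Real.sin θ ^ 2) pψ :=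
      ((hasDerivAt_pow 2 pψ).div_const _).const_add _
    simpa using this.deriv
  -- ∂G/∂ψ
  have h8 : deriv (fun t => G θ t pθ pψ) ψ =
      pθ * (-Real.sin ψ) - pψ * Real.cos ψ * (Real.cos θ / Real.sin θ) := by
    simp only [hG]
    have : HasDerivAt (fun t : ℝ => pθ * Real.cos t - pψ * Real.sin t *
        (Real.cos θ / Real.sin θ))
        (pθ * (-Real.sin ψ) - pψ * Real.cos ψ * (Real.cos θ / Real.sin θ)) ψ := by
      have h1' := (Real.hasDerivAt_cos ψ).const_mul pθ
      have h2' := (((Real.hasDerivAt_sin ψ).const_mul pψ).mul_const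
        (Real.cos θ / Real.sin θ))
      simpa [mul_assoc, mul_comm, mul_left_comm] using h1'.fun_sub h2'
    exact this.deriv
  rw [h1, h2, h3, h4, h5, h6, h7, h8]
  have hpyth : Real.sin θ ^ 2 + Real.cos θ ^ 2 = 1 := Real.sin_sq_add_cos_sq θ
  field_simp
  linear_combination (-(2 * pψ * pθ * Real.sin ψ * Real.sin θ ^ 2)) * hpyth
end
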